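/- arXiv:1805.07105 — 8 statements merged into one kernel-verified Lean document; each statement's English description precedes it below -/
import Mathlib

section
/- Let q = p^r be a prime power. Let χ : F_q² → ℂ^× be a group homomorphism for the group law (a_1,a_2)·(b_1,b_2) = (a_1+b_1, a_2+a_1b_1+b_2) on F_q², and assume χ is not trivial on the subgroup {(0,c) : c ∈ F_q}, i.e. χ(0,c) ≠ 1 for some c ∈ F_q. Then (∑_{a ∈ F_q} χ(a, 0)) · conj(∑_{a ∈ F_q} χ(a, 0)) = q; in particular |∑_{a ∈ F_q} χ(a,0)| = √q. -/
/-!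
Write `ψ c = χ(0, c)`; it is a nontrivial additive character of `F_q`. Comparing
`(t, 0)·(b, 0)·(0, -tb) = (t + b, 0)` gives `χ(t + b, 0) = χ(t, 0) χ(b, 0) ψ(-tb)`, and the values
of `χ` lie on the unit circle since their powers take only finitely many values. Hence
`|∑ χ(a, 0)|² = ∑_t χ(t, 0) ∑_b ψ(-tb)`, and orthogonality of `ψ` leaves only `t = 0`,
which contributes `q`.
-/

open Finset ComplexConjugate

namespace TwoCoeffChar

section CommRing

variable {F : Type*} [CommRing F] {χ : F → F → ℂ}

theorem map_zero_zero (hne : ∀ a₁ a₂ : F, χ a₁ a₂ ≠ 0)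
    (hmul : ∀ a₁ a₂ b₁ b₂ : F, χ (a₁ + b₁) (a₂ + a₁ * b₁ + b₂) = χ a₁ a₂ * χ b₁ b₂) :
    χ 0 0 = 1 := by
  have h := hmul 0 0 0 0
  simp only [add_zero, mul_zero] at h
  exact (mul_eq_left₀ (hne 0 0)).mp h.symm

def centerChar (hne : ∀ a₁ a₂ : F, χ a₁ a₂ ≠ 0)
    (hmul : ∀ a₁ a₂ b₁ b₂ : F, χ (a₁ + b₁) (a₂ + a₁ * b₁ + b₂) = χ a₁ a₂ * χ b₁ b₂) :
    AddChar F ℂ where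
  toFun := χ 0
  map_zero_eq_one' := map_zero_zero hne hmul
  map_add_eq_mul' c d := by simpa using hmul 0 c 0 d

theorem centerChar_ne_one (hne : ∀ a₁ a₂ : F, χ a₁ a₂ ≠ 0)
    (hmul : ∀ a₁ a₂ b₁ b₂ : F, χ (a₁ + b₁) (a₂ + a₁ * b₁ + b₂) = χ a₁ a₂ * χ b₁ b₂)
    (hnt : ∃ c : F, χ 0 c ≠ 1) : centerChar hne hmul ≠ 1 := by
  obtain ⟨c, hc⟩ := hnt
  exact fun h => hc (congrArg (· c) h)

theorem pow_mem_range (hne : ∀ a₁ a₂ : F, χ a₁ a₂ ≠ 0)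
    (hmul : ∀ a₁ a₂ b₁ b₂ : F, χ (a₁ + b₁) (a₂ + a₁ * b₁ + b₂) = χ a₁ a₂ * χ b₁ b₂)
    (a b : F) (n : ℕ) : χ a b ^ n ∈ Set.range (Function.uncurry χ) := by
  induction n with
  | zero => exact ⟨(0, 0), map_zero_zero hne hmul⟩
  | succ n ih =>
    obtain ⟨⟨x, y⟩, hxy⟩ := ih
    exact ⟨(x + a, y + x * a + b), by
      rw [pow_succ, ← hxy, Function.uncurry_apply_pair, Function.uncurry_apply_pair, hmul]⟩

theorem norm_eq_one [Finite F] (hne : ∀ a₁ a₂ : F, χ a₁ a₂ ≠ 0)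
    (hmul : ∀ a₁ a₂ b₁ b₂ : F, χ (a₁ + b₁) (a₂ + a₁ * b₁ + b₂) = χ a₁ a₂ * χ b₁ b₂)
    (a b : F) : ‖χ a b‖ = 1 := by
  obtain ⟨m, n, hmn, hpow⟩ := Finite.exists_ne_map_eq_of_infinite
    fun n : ℕ => (⟨χ a b ^ n, pow_mem_range hne hmul a b n⟩ : Set.range (Function.uncurry χ))
  have hpow : ‖χ a b‖ ^ m = ‖χ a b‖ ^ n := by
    rw [← norm_pow, ← norm_pow]
    exact congrArg (‖·‖) (congrArg Subtype.val hpow)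
  by_contra h
  exact hmn ((pow_right_inj₀ (norm_pos_iff.mpr (hne a b)) h).mp hpow)

theorem mul_conj_eq_one [Finite F] (hne : ∀ a₁ a₂ : F, χ a₁ a₂ ≠ 0)
    (hmul : ∀ a₁ a₂ b₁ b₂ : F, χ (a₁ + b₁) (a₂ + a₁ * b₁ + b₂) = χ a₁ a₂ * χ b₁ b₂)
    (a b : F) : χ a b * conj (χ a b) = 1 := by
  rw [RCLike.mul_conj, norm_eq_one hne hmul]
  norm_num

theorem map_add_zero
    (hmul : ∀ a₁ a₂ b₁ b₂ : F, χ (a₁ + b₁) (a₂ + a₁ * b₁ + b₂) = χ a₁ a₂ * χ b₁ b₂)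
    (t b : F) : χ (t + b) 0 = χ t 0 * χ b 0 * χ 0 (-(t * b)) := by
  have h₁ := hmul t 0 b (-(t * b))
  have h₂ := hmul b 0 0 (-(t * b))
  simp only [zero_add, add_neg_cancel, mul_zero, add_zero] at h₁ h₂
  rw [h₁, h₂, mul_assoc]

end CommRing

theorem sum_mul_conj_sum {F : Type*} [Field F] [Fintype F] {χ : F → F → ℂ}
    (hne : ∀ a₁ a₂ : F, χ a₁ a₂ ≠ 0)
    (hmul : ∀ a₁ a₂ b₁ b₂ : F, χ (a₁ + b₁) (a₂ + a₁ * b₁ + b₂) = χ a₁ a₂ * χ b₁ b₂)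
    (hnt : ∃ c : F, χ 0 c ≠ 1) :
    (∑ a, χ a 0) * conj (∑ a, χ a 0) = Fintype.card F := by
  classical
  set ψ := centerChar hne hmul
  have hψ : ψ.IsPrimitive := .of_ne_one (centerChar_ne_one hne hmul hnt)
  have hterm (t b : F) : χ (t + b) 0 * conj (χ b 0) = χ t 0 * ψ (b * -t) := by
    rw [map_add_zero hmul, mul_right_comm, mul_assoc (χ t 0), mul_conj_eq_one hne hmul, mul_one,
      mul_neg, mul_comm b]
    rfl
  calc (∑ a, χ a 0) * conj (∑ a, χ a 0)
      = ∑ b, ∑ t, χ (t + b) 0 * conj (χ b 0) := by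
        rw [map_sum, sum_mul_sum, sum_comm]
        exact sum_congr rfl fun b _ =>
          (Fintype.sum_equiv (Equiv.addRight b) _ _ fun _ => rfl).symm
    _ = ∑ t, χ t 0 * ∑ b, ψ (b * -t) := by
        simp only [hterm, mul_sum]
        exact sum_comm
    _ = Fintype.card F := by
        simp only [AddChar.sum_mulShift _ hψ, neg_eq_zero, Nat.cast_ite, Nat.cast_zero, mul_ite, mul_zero]
        rw [sum_ite_eq' univ 0, if_pos (mem_univ 0), map_zero_zero hne hmul, one_mul]

end TwoCoeffChar

theorem charSum_two_coeff_abs_sq_general (p r : ℕ)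
    {F : Type} [Field F] [Fintype F] (hF : Fintype.card F = p ^ r)
    (χ : F → F → ℂ)
    (hne : ∀ a₁ a₂ : F, χ a₁ a₂ ≠ 0)
    (hmul : ∀ a₁ a₂ b₁ b₂ : F,
      χ (a₁ + b₁) (a₂ + a₁ * b₁ + b₂) = χ a₁ a₂ * χ b₁ b₂)
    (hnt : ∃ c : F, χ 0 c ≠ 1) :
    (∑ a : F, χ a 0) * (starRingEnd ℂ) (∑ a : F, χ a 0) = ((p : ℂ) ^ r) := by
  rw [TwoCoeffChar.sum_mul_conj_sum hne hmul hnt, hF]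
  push_cast
  rfl

/-- For a character `χ` of the group `(F_q², ·)` with
`(a₁,a₂)·(b₁,b₂) = (a₁+b₁, a₂+a₁b₁+b₂)` that is nontrivial on the subgroup
`{(0,c)}`, the Gauss-type sum `∑_a χ(a,0)` has `|∑_a χ(a,0)|² = q`. -/
theorem charSum_two_coeff_abs_sq (p r : ℕ) (hp : p.Prime) (hr : 1 ≤ r)
    {F : Type} [Field F] [Fintype F] (hF : Fintype.card F = p ^ r)
    (χ : F → F → ℂ)
    (hne : ∀ a₁ a₂ : F, χ a₁ a₂ ≠ 0)
    (hmul : ∀ a₁ a₂ b₁ b₂ : F,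
      χ (a₁ + b₁) (a₂ + a₁ * b₁ + b₂) = χ a₁ a₂ * χ b₁ b₂)
    (hnt : ∃ c : F, χ 0 c ≠ 1) :
    (∑ a : F, χ a 0) * (starRingEnd ℂ) (∑ a : F, χ a 0) = ((p : ℂ) ^ r) :=
  charSum_two_coeff_abs_sq_general p r hF χ hne hmul hnt
end

section
/- Let m_1, m_2 be positive integers with m_2 dividing m_1, and let F_1, …, F_{m_1} ∈ ℚ[x]. Define S : ℤ² → ℂ by S(k_1, k_2) = ∑_{i=1}^{m_1} ω_{m_1}^{i·k_1} · F_i(ω_{m_2}^{k_2}), where ω_k = e^{2πi/k}. Assume S(k_1, k_2) ∈ ℚ for all k_1, k_2 ∈ ℤ. Then: (1) S(k_1, k_2) is periodic in k_1 with period m_1 and in k_2 with period m_2; (2) for every λ ∈ ℤ with gcd(λ, m_1) = 1, S(k_1, k_2) = S(λk_1, λk_2) for all k_1, k_2 ∈ ℤ; (3) for all k_1, k_2 ∈ ℤ and every d ∈ ℤ with gcd(d, m_1) = 1 and d · (k_1/gcd(k_1, m_1)) ≡ 1 (mod m_1/gcd(k_1, m_1)), one has S(k_1, k_2) = S(gcd(k_1,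 m_1), d·k_2). -/
open Finset Polynomial

/-!
On `m`-th roots of unity every power `z ^ k`, `k ∈ ℤ`, is a power `z ^ n` with `n ∈ ℕ`; since
`ω_{m₂} = ω_{m₁}^{m₁/m₂}`, `S(k₁, k₂)` is the value at `ω_{m₁}` of a rational polynomial, and
`S(λk₁, λk₂)` is the value of the same polynomial at the primitive root `ω_{m₁}^λ`. All primitive `m₁`-th roots of unity share the minimal
polynomial `Φ_{m₁}`, so a rational value at one of them is taken at all of them. The remaining
claims only use periodicity of `k ↦ z ^ k` and `d k₁ ≡ gcd(k₁, m₁) (mod m₁)`.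
-/

theorem zpow_eq_zpow_of_modEq {G₀ : Type*} [GroupWithZero G₀] {z : G₀} {m : ℕ} (hz : z ^ m = 1)
    {a b : ℤ} (h : a ≡ b [ZMOD m]) : z ^ a = z ^ b := by
  obtain ⟨t, ht⟩ := h.dvd
  rcases eq_or_ne z 0 with rfl | hz0
  · obtain rfl : m = 0 := by by_contra hm; simp [zero_pow hm] at hz
    simp only [Nat.cast_zero, zero_mul, sub_eq_zero] at ht
    rw [ht]
  · rw [show b = a + m * t by omega, zpow_add₀ hz0, zpow_mul, zpow_natCast, hz, one_zpow, mul_one]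

theorem exists_aeval_eq_sum_zpow_mul_aeval {R K ι : Type*} [CommSemiring R] [Field K]
    [Algebra R K] (m : ℕ) [NeZero m] (s : Finset ι) (F : ι → R[X]) (a : ι → ℤ) (b : ℤ) :
    ∃ P : R[X], ∀ z : K, z ^ m = 1 → aeval z P = ∑ i ∈ s, z ^ a i * aeval (z ^ b) (F i) := by
  have hpow : ∀ z : K, z ^ m = 1 → ∀ k : ℤ, z ^ (k % m).toNat = z ^ k := fun z hz k => by
    rw [← zpow_natCast, Int.toNat_of_nonneg (Int.emod_nonneg _ (by exact_mod_cast NeZero.ne m))]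
    exact zpow_eq_zpow_of_modEq hz (Int.mod_modEq k m)
  refine ⟨∑ i ∈ s, X ^ (a i % m).toNat * (F i).comp (X ^ (b % m).toNat), fun z hz => ?_⟩
  simp only [map_sum, map_mul, map_pow, aeval_X, aeval_comp, hpow z hz]

theorem IsPrimitiveRoot.aeval_eq_of_aeval_eq_ratCast {K : Type*} [Field K] [CharZero K] {m : ℕ}
    (hm : 0 < m) {ζ η : K} (hζ : IsPrimitiveRoot ζ m) (hη : IsPrimitiveRoot η m) {P : ℚ[X]}
    {q : ℚ} (h : aeval ζ P = q) : aeval η P = q := by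
  have hdvd : minpoly ℚ η ∣ P - C q := by
    rw [← cyclotomic_eq_minpoly_rat hη hm, cyclotomic_eq_minpoly_rat hζ hm]
    exact minpoly.dvd ℚ ζ (by simp [h])
  simpa [sub_eq_zero] using aeval_eq_zero_of_dvd_aeval_eq_zero hdvd (minpoly.aeval ℚ η)

theorem IsPrimitiveRoot.sum_zpow_mul_aeval_eq_of_eq_ratCast {K ι : Type*} [Field K] [CharZero K]
    {m : ℕ} (hm : 0 < m) {ζ η : K} (hζ : IsPrimitiveRoot ζ m) (hη : IsPrimitiveRoot η m)
    (s : Finset ι) (F : ι → ℚ[X]) (a : ι → ℤ) (b : ℤ) {q : ℚ}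
    (h : ∑ i ∈ s, ζ ^ a i * aeval (ζ ^ b) (F i) = q) :
    ∑ i ∈ s, η ^ a i * aeval (η ^ b) (F i) = q := by
  have : NeZero m := ⟨hm.ne'⟩
  obtain ⟨P, hP⟩ := exists_aeval_eq_sum_zpow_mul_aeval (K := K) m s F a b
  rw [← hP η hη.pow_eq_one]
  exact hζ.aeval_eq_of_aeval_eq_ratCast hm hη (by rw [hP ζ hζ.pow_eq_one, h])

theorem Complex.exp_two_pi_I_div_eq_pow (n : ℕ) {c : ℕ} (hc : c ≠ 0) :
    exp (2 * Real.pi * I / n) = exp (2 * Real.pi * I / ↑(n * c)) ^ c := by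
  rw [← exp_nat_mul]
  congr 1
  push_cast
  field_simp

theorem Int.mul_modEq_gcd {a m d : ℤ} (h : d * (a / a.gcd m) ≡ 1 [ZMOD m / a.gcd m]) :
    d * a ≡ a.gcd m [ZMOD m] := by
  have := h.mul_left' (c := (a.gcd m : ℤ))
  rwa [Int.mul_ediv_cancel' (Int.gcd_dvd_right a m), mul_left_comm,
    Int.mul_ediv_cancel' (Int.gcd_dvd_left a m), mul_one] at this

theorem rootOfUnity_sum_symmetries_general (m1 m2 : ℕ) (hm1 : 0 < m1)
    (hdvd : m2 ∣ m1) (Fp : Fin m1 → Polynomial ℚ) (S : ℤ → ℤ → ℂ)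
    (hS : ∀ k1 k2 : ℤ, S k1 k2 =
      ∑ i : Fin m1,
        Complex.exp (2 * Real.pi * Complex.I / m1) ^ (((i : ℕ) + 1 : ℤ) * k1) *
          Polynomial.aeval (Complex.exp (2 * Real.pi * Complex.I / m2) ^ k2) (Fp i))
    (hrat : ∀ k1 k2 : ℤ, ∃ s : ℚ, S k1 k2 = (s : ℂ)) :
    (∀ k1 k2 : ℤ, S (k1 + m1) k2 = S k1 k2 ∧ S k1 (k2 + m2) = S k1 k2)
    ∧ (∀ lam : ℤ, Int.gcd lam m1 = 1 → ∀ k1 k2 : ℤ, S k1 k2 = S (lam * k1) (lam * k2))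
    ∧ (∀ k1 k2 d : ℤ, Int.gcd d m1 = 1 →
        Int.ModEq ((m1 : ℤ) / (Int.gcd k1 m1 : ℤ)) (d * (k1 / (Int.gcd k1 m1 : ℤ))) 1 →
        S k1 k2 = S ((Int.gcd k1 m1 : ℕ) : ℤ) (d * k2)) := by
  obtain ⟨c, hc⟩ := hdvd
  have hω₂ : Complex.exp (2 * Real.pi * Complex.I / m2) =
      Complex.exp (2 * Real.pi * Complex.I / m1) ^ (c : ℤ) := by
    rw [zpow_natCast, hc]
    exact Complex.exp_two_pi_I_div_eq_pow m2 (right_ne_zero_of_mul (hc ▸ hm1.ne'))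
  set ω := Complex.exp (2 * Real.pi * Complex.I / m1)
  have hω : IsPrimitiveRoot ω m1 := Complex.isPrimitiveRoot_exp m1 hm1.ne'
  have hω₂_pow : (ω ^ (c : ℤ)) ^ m2 = 1 := by
    rw [zpow_natCast, ← pow_mul, mul_comm, ← hc, hω.pow_eq_one]
  have hS_congr : ∀ a a' b b', a ≡ a' [ZMOD m1] → b ≡ b' [ZMOD m2] → S a b = S a' b' := by
    intro a a' b b' ha hb
    simp only [hS, hω₂, zpow_eq_zpow_of_modEq hω.pow_eq_one (ha.mul_left _),
      zpow_eq_zpow_of_modEq hω₂_pow hb]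
  have hS_galois : ∀ lam : ℤ, Int.gcd lam m1 = 1 → ∀ k1 k2, S k1 k2 = S (lam * k1) (lam * k2) := by
    intro lam hlam k1 k2
    obtain ⟨q, hq⟩ := hrat k1 k2
    have key := hω.sum_zpow_mul_aeval_eq_of_eq_ratCast hm1 (hω.zpow_of_gcd_eq_one lam hlam) univ Fp
      (fun i => ((i : ℕ) + 1 : ℤ) * k1) (c * k2) (q := q) (by simpa only [hS, hω₂, ← zpow_mul] using hq)
    rw [hq, ← key, hS, hω₂]
    simp only [← zpow_mul, mul_left_comm]
  refine ⟨fun k1 k2 => ⟨hS_congr _ _ _ _ Int.add_modEq_right rfl,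
    hS_congr _ _ _ _ rfl Int.add_modEq_right⟩, hS_galois, fun k1 k2 d hd h => ?_⟩
  rw [hS_galois d hd k1 k2]
  exact hS_congr _ _ _ _ (Int.mul_modEq_gcd h) rfl

/-- Symmetries of rational-valued sums
`S(k₁,k₂) = ∑_{i=1}^{m₁} ω_{m₁}^{i k₁} F_i(ω_{m₂}^{k₂})` with `F_i ∈ ℚ[x]`, `m₂ ∣ m₁`. -/
theorem rootOfUnity_sum_symmetries (m1 m2 : ℕ) (hm1 : 0 < m1) (hm2 : 0 < m2)
    (hdvd : m2 ∣ m1) (Fp : Fin m1 → Polynomial ℚ) (S : ℤ → ℤ → ℂ)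
    (hS : ∀ k1 k2 : ℤ, S k1 k2 =
      ∑ i : Fin m1,
        Complex.exp (2 * Real.pi * Complex.I / m1) ^ (((i : ℕ) + 1 : ℤ) * k1) *
          Polynomial.aeval (Complex.exp (2 * Real.pi * Complex.I / m2) ^ k2) (Fp i))
    (hrat : ∀ k1 k2 : ℤ, ∃ s : ℚ, S k1 k2 = (s : ℂ)) :
    (∀ k1 k2 : ℤ, S (k1 + m1) k2 = S k1 k2 ∧ S k1 (k2 + m2) = S k1 k2)
    ∧ (∀ lam : ℤ, Int.gcd lam m1 = 1 → ∀ k1 k2 : ℤ, S k1 k2 = S (lam * k1) (lam * k2))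
    ∧ (∀ k1 k2 d : ℤ, Int.gcd d m1 = 1 →
        Int.ModEq ((m1 : ℤ) / (Int.gcd k1 m1 : ℤ)) (d * (k1 / (Int.gcd k1 m1 : ℤ))) 1 →
        S k1 k2 = S ((Int.gcd k1 m1 : ℕ) : ℤ) (d * k2)) :=
  rootOfUnity_sum_symmetries_general m1 m2 hm1 hdvd Fp S hS hrat
end

section
/- Let q = p^r be a prime power and let ℓ ≥ 1 be an integer. Let t = ⌈log_p(ℓ+1)⌉ be the least non-negative integer with p^t ≥ ℓ + 1. Then p^t is the least positive integer e with the following property: for every monic polynomial A ∈ F_q[T], say of degree m, the coefficient of T^{em−j} in A^e vanishes for every integer j with 1 ≤ j ≤ min(ℓ, em). (Equivalently, the group of monic polynomials in F_q[T] modulo agreement of the first ℓ next-to-leading coefficients has exponent p^{⌈log_p(ℓ+1)⌉}.) -/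
/-!
In characteristic `p` we have `A ^ p ^ t = expand (p ^ t) A` up to Frobenius on the
coefficients, so only the coefficients of `T ^ k` with `p ^ t ∣ k` survive; the first `p ^ t - 1`
next-to-leading coefficients vanish, and `p ^ t - 1 ≥ ℓ`. Conversely, write `e = p ^ v * a` with
`p ∤ a`. The coefficient of `T ^ (e - p ^ v)` in `(T + 1) ^ e` is `choose e (p ^ v) ≡ a (mod p)`
by Lucas' theorem, which is nonzero; so an exponent `e` with the property forces `p ^ v > ℓ`,
i.e. `p ^ t ≤ p ^ v ≤ e`.
-/

open Polynomial

theorem Nat.not_dvd_choose_pow_mul_pow {p : ℕ} [Fact p.Prime] (v : ℕ) {a : ℕ} (ha : ¬p ∣ a) :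
    ¬p ∣ (p ^ v * a).choose (p ^ v) := by
  have hmod : (p ^ v * a).choose (p ^ v) ≡ a [MOD p] := by
    simpa using Choose.choose_pow_mul_pow_mul_modEq_choose_nat (p := p) (k := v) (a := a) (b := 1)
  intro h
  exact ha (Nat.modEq_zero_iff_dvd.mp ((Nat.modEq_zero_iff_dvd.mpr h).symm.trans hmod).symm)

namespace Polynomial

variable {R : Type*} [CommSemiring R]

theorem coeff_pow_expChar_pow_eq_zero_of_not_dvd (p : ℕ) [ExpChar R p] (f : R[X]) {n k : ℕ}
    (hk : ¬p ^ n ∣ k) : (f ^ p ^ n).coeff k = 0 := by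
  rw [← map_iterateFrobenius_expand, coeff_map,
    coeff_expand (pow_pos (expChar_pos R p) n), if_neg hk, map_zero]

theorem coeff_pow_expChar_pow_mul_sub_eq_zero (p : ℕ) [ExpChar R p] (f : R[X]) (m : ℕ) {n j : ℕ}
    (hj₀ : 0 < j) (hj : j < p ^ n) (hjm : j ≤ p ^ n * m) :
    (f ^ p ^ n).coeff (p ^ n * m - j) = 0 := by
  refine coeff_pow_expChar_pow_eq_zero_of_not_dvd p f fun hdvd => ?_
  have hj_dvd : p ^ n ∣ j := by
    simpa [Nat.sub_sub_self hjm] using Nat.dvd_sub (dvd_mul_right (p ^ n) m) hdvd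
  exact absurd (Nat.le_of_dvd hj₀ hj_dvd) (not_le.mpr hj)

theorem coeff_X_add_one_pow_sub_ne_zero (p : ℕ) [Fact p.Prime] [CharP R p] (v : ℕ) {a : ℕ}
    (ha : ¬p ∣ a) : ((X + 1 : R[X]) ^ (p ^ v * a)).coeff (p ^ v * a - p ^ v) ≠ 0 := by
  have hle : p ^ v ≤ p ^ v * a :=
    Nat.le_mul_of_pos_right _ (Nat.pos_of_ne_zero fun h => ha (h ▸ dvd_zero p))
  rw [coeff_X_add_one_pow, Nat.choose_symm hle, Ne, CharP.cast_eq_zero_iff R p]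
  exact Nat.not_dvd_choose_pow_mul_pow v ha

end Polynomial

theorem exponent_of_shortIntervalGroup_general (p r L : ℕ) (hp : p.Prime)
    {F : Type} [Field F] [Fintype F] (hF : Fintype.card F = p ^ r)
    (t : ℕ) (ht1 : L + 1 ≤ p ^ t) (ht2 : ∀ s : ℕ, L + 1 ≤ p ^ s → t ≤ s) :
    IsLeast {e : ℕ | 0 < e ∧ ∀ A : F[X], A.Monic →
        ∀ j : ℕ, 1 ≤ j → j ≤ min L (e * A.natDegree) →
          (A ^ e).coeff (e * A.natDegree - j) = 0} (p ^ t) := by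
  have : Fact p.Prime := ⟨hp⟩
  have : CharP F p := charP_of_card_eq_prime_pow hF
  refine ⟨⟨pow_pos hp.pos t, fun A _ j hj₀ hj => ?_⟩, ?_⟩
  · exact coeff_pow_expChar_pow_mul_sub_eq_zero p A _ hj₀
      (by have := hj.trans (min_le_left _ _); omega) (hj.trans (min_le_right _ _))
  rintro e ⟨he, hvanish⟩
  obtain ⟨v, a, ha, rfl⟩ := Nat.exists_eq_pow_mul_and_not_dvd he.ne' p hp.ne_one
  have hpv : p ^ v ≤ p ^ v * a := Nat.le_of_dvd he (dvd_mul_right _ _)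
  have hLv : L < p ^ v := by
    by_contra! hvL
    have hdeg : (X + 1 : F[X]).natDegree = 1 := natDegree_X_add_C 1
    apply coeff_X_add_one_pow_sub_ne_zero (R := F) p v ha
    simpa [hdeg] using hvanish (X + 1) (monic_X_add_C 1) (p ^ v) (Nat.one_le_pow _ _ hp.pos)
      (by rw [hdeg, mul_one]; exact le_min hvL hpv)
  exact (Nat.pow_le_pow_right hp.pos (ht2 v hLv)).trans hpv

/-- For `q = p^r` and `ℓ ≥ 1`, with `t = ⌈log_p(ℓ+1)⌉` the least
non-negative integer such that `p^t ≥ ℓ+1`, the number `p^t` is the least positive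
integer `e` such that for every monic `A ∈ F_q[T]` of degree `m`, the coefficient of
`T^{em−j}` in `A^e` vanishes for all `1 ≤ j ≤ min(ℓ, em)`; i.e. the group of monic
polynomials modulo agreement of the first `ℓ` next-to-leading coefficients has
exponent `p^t`. -/
theorem exponent_of_shortIntervalGroup (p r L : ℕ) (hp : p.Prime) (hr : 1 ≤ r)
    (hL : 1 ≤ L)
    {F : Type} [Field F] [Fintype F] (hF : Fintype.card F = p ^ r)
    (t : ℕ) (ht1 : L + 1 ≤ p ^ t) (ht2 : ∀ s : ℕ, L + 1 ≤ p ^ s → t ≤ s) :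
    IsLeast {e : ℕ | 0 < e ∧ ∀ A : F[X], A.Monic →
        ∀ j : ℕ, 1 ≤ j → j ≤ min L (e * A.natDegree) →
          (A ^ e).coeff (e * A.natDegree - j) = 0} (p ^ t) :=
  exponent_of_shortIntervalGroup_general p r L hp hF t ht1 ht2
end

section
/- Let q = p^r be a prime power with p ≥ 5. A function χ : F_q³ → ℂ^× is a group homomorphism for the group law (a_1,a_2,a_3)·(b_1,b_2,b_3) = (a_1+b_1, a_2+a_1b_1+b_2, a_3+a_1b_2+a_2b_1+b_3) on F_q³ if and only if there exist λ_1, λ_2, λ_3 ∈ F_q such that χ(a_1, a_2, a_3) = χ_q(λ_1·a_1 + λ_2·(a_2 − a_1²/2) + λ_3·(a_3 − a_1a_2 + a_1³/3)) for all a_1, a_2, a_3 ∈ F_q; moreover, the constants λ_1, λ_2, λ_3 are uniquely determined by χ. (The expressions a_1, a_2 − a_1²/2, a_3 − a_1a_2 + a_1³/3 are the coefficients of T, T², T³ in the truncated logarithm log(1 + a_1T + a_2T² + a_3T³), well defined since p ≥ 5.) -/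
-- The canonical additive character `χ_q(a) = exp(2πi·Tr_{F_q/F_p}(a)/p)` of `F_q`.
noncomputable def traceChar (p r : ℕ) [Fact p.Prime] (a : GaloisField p r) : ℂ :=
  Complex.exp (2 * Real.pi * Complex.I *
    ((Algebra.trace (ZMod p) (GaloisField p r) a).val : ℂ) / p)

section Aux

variable (p r : ℕ) [Fact p.Prime]

lemma exp_mod (p n : ℕ) (hp : 0 < p) :
    Complex.exp (2 * Real.pi * Complex.I * (n : ℂ) / p)
      = Complex.exp (2 * Real.pi * Complex.I * ((n % p : ℕ) : ℂ) / p) := by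
  conv_lhs => rw [← Nat.div_add_mod n p]
  have hp' : (p : ℂ) ≠ 0 := Nat.cast_ne_zero.2 hp.ne'
  rw [Nat.cast_add, Nat.cast_mul]
  rw [show 2 * Real.pi * Complex.I * ((p : ℂ) * ((n / p : ℕ) : ℂ) + ((n % p : ℕ) : ℂ)) / p
      = ((n / p : ℕ) : ℂ) * (2 * Real.pi * Complex.I)
        + 2 * Real.pi * Complex.I * ((n % p : ℕ) : ℂ) / p from by field_simp]
  rw [Complex.exp_add]
  rw [show ((n / p : ℕ) : ℂ) = (((n / p : ℕ) : ℤ) : ℂ) from by norm_cast,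
    Complex.exp_int_mul_two_pi_mul_I, one_mul]

lemma traceChar_add (a b : GaloisField p r) :
    traceChar p r (a + b) = traceChar p r a * traceChar p r b := by
  have hp : 0 < p := (Fact.out (p := p.Prime)).pos
  unfold traceChar
  rw [map_add, ZMod.val_add, ← exp_mod p _ hp, ← Complex.exp_add]
  congr 1
  have hp' : (p : ℂ) ≠ 0 := Nat.cast_ne_zero.2 hp.ne'
  rw [Nat.cast_add]
  field_simp

lemma traceChar_ne_zero (a : GaloisField p r) : traceChar p r a ≠ 0 :=
  Complex.exp_ne_zero _

lemma traceChar_zero : traceChar p r 0 = 1 := by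
  unfold traceChar
  simp

lemma traceChar_eq_one (a : GaloisField p r) (h : traceChar p r a = 1) :
    Algebra.trace (ZMod p) (GaloisField p r) a = 0 := by
  have hp : 0 < p := (Fact.out (p := p.Prime)).pos
  set v := (Algebra.trace (ZMod p) (GaloisField p r) a).val with hv
  rw [traceChar, Complex.exp_eq_one_iff] at h
  obtain ⟨n, hn⟩ := h
  have hπ : (2 : ℂ) * Real.pi * Complex.I ≠ 0 := by
    simp [Real.pi_ne_zero, Complex.I_ne_zero]
  have hp' : (p : ℂ) ≠ 0 := Nat.cast_ne_zero.2 hp.ne'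
  rw [div_eq_iff hp'] at hn
  have : (v : ℂ) = n * p :=
    mul_left_cancel₀ hπ (by linear_combination hn)
  have hz : (v : ℤ) = n * p := by exact_mod_cast this
  have hdvd : (p : ℤ) ∣ (v : ℤ) := ⟨n, by rw [hz]; ring⟩
  have hvp : v < p := ZMod.val_lt _
  have : v = 0 := Nat.eq_zero_of_dvd_of_lt (Int.natCast_dvd_natCast.mp hdvd) hvp
  rwa [ZMod.val_eq_zero] at this

lemma traceChar_nondeg (a : GaloisField p r)
    (h : ∀ x, traceChar p r (a * x) = 1) : a = 0 := by
  by_contra ha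
  have hsurj : Function.Surjective (fun x : GaloisField p r => a * x) := fun b =>
    ⟨a⁻¹ * b, by field_simp⟩
  have htr : ∀ b, Algebra.trace (ZMod p) (GaloisField p r) b = 0 := by
    intro b
    obtain ⟨x, rfl⟩ := hsurj b
    exact traceChar_eq_one p r _ (h x)
  obtain ⟨x, hx⟩ := Algebra.trace_surjective (ZMod p) (GaloisField p r) 1
  rw [htr] at hx
  exact one_ne_zero hx.symm

lemma traceChar_inj (a b : GaloisField p r)
    (h : ∀ x, traceChar p r (a * x) = traceChar p r (b * x)) : a = b := by
  have key : ∀ x, traceChar p r ((a - b) * x) = 1 := by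
    intro x
    have h1 : traceChar p r ((a - b) * x) * traceChar p r (b * x) = traceChar p r (a * x) := by
      rw [← traceChar_add, show (a - b) * x + b * x = a * x from by ring]
    rw [h x] at h1
    exact mul_right_cancel₀ (traceChar_ne_zero p r _) (by rw [h1, one_mul])
  exact sub_eq_zero.mp (traceChar_nondeg p r _ key)

end Aux

noncomputable def stdChar3 (p r : ℕ) [Fact p.Prime]
    (l : GaloisField p r × GaloisField p r × GaloisField p r) :
    AddChar (GaloisField p r × GaloisField p r × GaloisField p r) ℂ where
  toFun v := traceChar p r (l.1 * v.1 + l.2.1 * v.2.1 + l.2.2 * v.2.2)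
  map_zero_eq_one' := by
    simp only [Prod.fst_zero, Prod.snd_zero, mul_zero, add_zero]
    exact traceChar_zero p r
  map_add_eq_mul' a b := by
    simp only [Prod.fst_add, Prod.snd_add]
    rw [← traceChar_add]
    congr 1
    ring

lemma stdChar3_inj (p r : ℕ) [Fact p.Prime] :
    Function.Injective (stdChar3 p r) := by
  intro l l' h
  have key : ∀ v : GaloisField p r × GaloisField p r × GaloisField p r, traceChar p r (l.1 * v.1 + l.2.1 * v.2.1 + l.2.2 * v.2.2)
      = traceChar p r (l'.1 * v.1 + l'.2.1 * v.2.1 + l'.2.2 * v.2.2) :=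
    fun v => DFunLike.congr_fun h v
  have h1 : l.1 = l'.1 := traceChar_inj p r _ _ fun x => by
    simpa using key (x, 0, 0)
  have h2 : l.2.1 = l'.2.1 := traceChar_inj p r _ _ fun x => by
    simpa using key (0, x, 0)
  have h3 : l.2.2 = l'.2.2 := traceChar_inj p r _ _ fun x => by
    simpa using key (0, 0, x)
  exact Prod.ext h1 (Prod.ext h2 h3)

lemma stdChar3_surj (p r : ℕ) [Fact p.Prime]
    (ψ : AddChar (GaloisField p r × GaloisField p r × GaloisField p r) ℂ) :
    ∃ l, ψ = stdChar3 p r l := by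
  classical
  haveI : Fintype (GaloisField p r) := Fintype.ofFinite _
  have hbij : Function.Bijective (stdChar3 p r) :=
    (Fintype.bijective_iff_injective_and_card _).2
      ⟨stdChar3_inj p r, by rw [AddChar.card_eq]⟩
  obtain ⟨l, hl⟩ := hbij.2 ψ
  exact ⟨l, hl.symm⟩

/-- For `q = p^r` with `p ≥ 5`, a function `χ : F_q³ → ℂ^×` is a
character of the group law `(a₁,a₂,a₃)·(b₁,b₂,b₃) = (a₁+b₁, a₂+a₁b₁+b₂, a₃+a₁b₂+a₂b₁+b₃)`
iff there exist `λ₁,λ₂,λ₃ ∈ F_q` with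
`χ(a₁,a₂,a₃) = χ_q(λ₁a₁ + λ₂(a₂−a₁²/2) + λ₃(a₃−a₁a₂+a₁³/3))`; moreover `λ₁,λ₂,λ₃` are
uniquely determined. -/
theorem char_three_coeff_classification (p r : ℕ) [Fact p.Prime] (hp : 5 ≤ p)
    (hr : 1 ≤ r) (χ : GaloisField p r → GaloisField p r → GaloisField p r → ℂ) :
    (((∀ a1 a2 a3, χ a1 a2 a3 ≠ 0) ∧
      (∀ a1 a2 a3 b1 b2 b3 : GaloisField p r,
        χ (a1 + b1) (a2 + a1 * b1 + b2) (a3 + a1 * b2 + a2 * b1 + b3)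
          = χ a1 a2 a3 * χ b1 b2 b3))
      ↔ (∃ l1 l2 l3 : GaloisField p r, ∀ a1 a2 a3,
          χ a1 a2 a3 = traceChar p r
            (l1 * a1 + l2 * (a2 - a1 ^ 2 / 2) + l3 * (a3 - a1 * a2 + a1 ^ 3 / 3))))
    ∧ (∀ l1 l2 l3 l1' l2' l3' : GaloisField p r,
        (∀ a1 a2 a3 : GaloisField p r,
          traceChar p r
              (l1 * a1 + l2 * (a2 - a1 ^ 2 / 2) + l3 * (a3 - a1 * a2 + a1 ^ 3 / 3))
            = traceChar p r
              (l1' * a1 + l2' * (a2 - a1 ^ 2 / 2) + l3' * (a3 - a1 * a2 + a1 ^ 3 / 3))) →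
        l1 = l1' ∧ l2 = l2' ∧ l3 = l3') := by
  have h2 : (2 : GaloisField p r) ≠ 0 := by
    have : ((2 : ℕ) : GaloisField p r) ≠ 0 := by
      rw [Ne, CharP.cast_eq_zero_iff (GaloisField p r) p]
      intro hd; have := Nat.le_of_dvd (by norm_num) hd; omega
    simpa using this
  have h3 : (3 : GaloisField p r) ≠ 0 := by
    have : ((3 : ℕ) : GaloisField p r) ≠ 0 := by
      rw [Ne, CharP.cast_eq_zero_iff (GaloisField p r) p]
      intro hd; have := Nat.le_of_dvd (by norm_num) hd; omega
    simpa using this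
  have h6 : (6 : GaloisField p r) ≠ 0 := by
    have h62 : (6 : GaloisField p r) = 2 * 3 := by norm_num
    rw [h62]; exact mul_ne_zero h2 h3
  constructor
  · constructor
    · rintro ⟨hne, hmul⟩
      have h000 : χ 0 0 0 = 1 := by
        have h0 := hmul 0 0 0 0 0 0
        simp only [add_zero, zero_add, mul_zero, zero_mul] at h0
        have h0' : χ 0 0 0 * 1 = χ 0 0 0 * χ 0 0 0 := by rw [mul_one]; exact h0
        exact (mul_left_cancel₀ (hne 0 0 0) h0').symm
      obtain ⟨l, hl⟩ := stdChar3_surj p r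
        ⟨fun v => χ v.1 (v.2.1 + v.1 ^ 2 / 2) (v.2.2 + v.1 * v.2.1 + v.1 ^ 3 / 6),
         by simpa using h000,
         fun u v => by
          simp only [Prod.fst_add, Prod.snd_add]
          rw [show (u.2.1 + v.2.1) + (u.1 + v.1) ^ 2 / 2
              = (u.2.1 + u.1 ^ 2 / 2) + u.1 * v.1 + (v.2.1 + v.1 ^ 2 / 2) from by
                field_simp; ring,
             show (u.2.2 + v.2.2) + (u.1 + v.1) * (u.2.1 + v.2.1) + (u.1 + v.1) ^ 3 / 6
              = (u.2.2 + u.1 * u.2.1 + u.1 ^ 3 / 6) + u.1 * (v.2.1 + v.1 ^ 2 / 2)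
                + (u.2.1 + u.1 ^ 2 / 2) * v.1 + (v.2.2 + v.1 * v.2.1 + v.1 ^ 3 / 6) from by
                field_simp; ring]
          exact hmul _ _ _ _ _ _⟩
      refine ⟨l.1, l.2.1, l.2.2, fun a1 a2 a3 => ?_⟩
      have h : χ a1 ((a2 - a1 ^ 2 / 2) + a1 ^ 2 / 2)
          ((a3 - a1 * a2 + a1 ^ 3 / 3) + a1 * (a2 - a1 ^ 2 / 2) + a1 ^ 3 / 6)
        = traceChar p r (l.1 * a1 + l.2.1 * (a2 - a1 ^ 2 / 2)
            + l.2.2 * (a3 - a1 * a2 + a1 ^ 3 / 3)) :=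
        DFunLike.congr_fun hl (a1, a2 - a1 ^ 2 / 2, a3 - a1 * a2 + a1 ^ 3 / 3)
      rw [show (a2 - a1 ^ 2 / 2) + a1 ^ 2 / 2 = a2 from by ring,
          show (a3 - a1 * a2 + a1 ^ 3 / 3) + a1 * (a2 - a1 ^ 2 / 2) + a1 ^ 3 / 6 = a3 from by
            field_simp; ring] at h
      exact h
    · rintro ⟨l1, l2, l3, h⟩
      refine ⟨fun a1 a2 a3 => by rw [h]; exact traceChar_ne_zero p r _, ?_⟩
      intro a1 a2 a3 b1 b2 b3
      rw [h, h, h, ← traceChar_add]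
      congr 1
      field_simp
      ring
  · intro l1 l2 l3 l1' l2' l3' h
    have key : ∀ x y z : GaloisField p r,
        traceChar p r (l1 * x + l2 * y + l3 * z)
          = traceChar p r (l1' * x + l2' * y + l3' * z) := by
      intro x y z
      have hh := h x (y + x ^ 2 / 2) (z + x * y + x ^ 3 / 6)
      rw [show y + x ^ 2 / 2 - x ^ 2 / 2 = y from by ring,
          show z + x * y + x ^ 3 / 6 - x * (y + x ^ 2 / 2) + x ^ 3 / 3 = z from by
            field_simp; ring] at hh
      exact hh
    refine ⟨?_, ?_, ?_⟩
    · exact traceChar_inj p r _ _ fun x => by simpa using key x 0 0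
    · exact traceChar_inj p r _ _ fun x => by simpa using key 0 x 0
    · exact traceChar_inj p r _ _ fun x => by simpa using key 0 0 x
end

section
/- Let q = 2^r be a power of 2. Let χ : F_q³ → ℂ^× be a group homomorphism for the group law (a_1,a_2,a_3)·(b_1,b_2,b_3) = (a_1+b_1, a_2+a_1b_1+b_2, a_3+a_1b_2+a_2b_1+b_3), and assume χ is primitive, i.e. χ(0,0,c) ≠ 1 for some c ∈ F_q. For n ≥ 0 let c_n(χ) = ∑_f χ(a_1(f), a_2(f), a_3(f)), the sum over all monic f ∈ F_q[T] of degree n, where a_j(f) is the coefficient of T^{n−j} in f (taken to be 0 when j > n). Then c_n(χ) = 0 for all n ≥ 3, and every complex number z satisfying 1 + c_1(χ)·z + c_2(χ)·z² = 0 satisfies q^{12} · z^{24} = 1. (Equivalently, writing L(u,χ) = (1 − γ_1u)(1 − γ_2u), the ratios γ_i/√q are roots of unity of order dividing 24.) -/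
open Polynomial Finset

/-- The monic polynomial `X^n + ∑_{i<n} c i · X^i` of degree `n` determined by its
lower coefficients `c : Fin n → F`. -/
noncomputable def polyOf {F : Type*} [Field F] (n : ℕ) (c : Fin n → F) : F[X] :=
  X ^ n + ∑ i : Fin n, C (c i) * X ^ (i : ℕ)

/-- The `j`-th next-to-leading coefficient (coefficient of `T^(n-j)`) of `polyOf n c`,
with the convention that it is `0` for `j > n`. -/
noncomputable def coefOf {F : Type*} [Field F] (n : ℕ) (c : Fin n → F) (j : ℕ) : F :=
  if j ≤ n then (polyOf n c).coeff (n - j) else 0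

-- The polynomial von Mangoldt function: `Λ(f) = deg P` if `f = P^k` with `P`
-- monic irreducible and `k ≥ 1`, and `0` otherwise.
open scoped Classical in
noncomputable def Lam {F : Type*} [Field F] (f : F[X]) : ℕ :=
  if h : ∃ P : F[X], P.Monic ∧ Irreducible P ∧ ∃ k : ℕ, 1 ≤ k ∧ f = P ^ k
  then h.choose.natDegree else 0

-- `ψ_q(n, t 1, …, t ℓ)`: the sum of `Λ` over all monic polynomials of degree `n`
-- whose first `ℓ` next-to-leading coefficients are `t 1, …, t ℓ` (with the convention
-- that the `j`-th next-to-leading coefficient is `0` for `j > n`).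
open scoped Classical in
noncomputable def psiSum {F : Type*} [Field F] [Fintype F] (n ℓ : ℕ) (t : ℕ → F) : ℕ :=
  ∑ c : Fin n → F,
    if ∀ j : ℕ, 1 ≤ j → j ≤ ℓ → coefOf n c j = t j then Lam (polyOf n c) else 0

/-- Packaging three prescribed coefficients into a function `ℕ → F`. -/
def t3fun {F : Type*} [Field F] (t1 t2 t3 : F) : ℕ → F :=
  fun j => if j = 1 then t1 else if j = 2 then t2 else if j = 3 then t3 else 0

-- `c_n(χ)`: the sum over all monic polynomials `f` of degree `n` of `χ` applied to
-- the triple of the first three next-to-leading coefficients of `f`.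
noncomputable def charSum3 {F : Type*} [Field F] [Fintype F]
    (χ : F → F → F → ℂ) (n : ℕ) : ℂ :=
  ∑ c : Fin n → F, χ (coefOf n c 1) (coefOf n c 2) (coefOf n c 3)


lemma polyOf_coeff {F : Type*} [Field F] (n : ℕ) (c : Fin n → F) (k : ℕ) (hk : k < n) :
    (polyOf n c).coeff k = c ⟨k, hk⟩ := by
  unfold polyOf
  rw [Polynomial.coeff_add, Polynomial.coeff_X_pow, if_neg (by omega : ¬ k = n),
    Polynomial.finset_sum_coeff]
  rw [Finset.sum_eq_single (⟨k, hk⟩ : Fin n)]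
  · simp [Polynomial.coeff_C_mul, Polynomial.coeff_X_pow]
  · intro i _ hi
    rw [Polynomial.coeff_C_mul, Polynomial.coeff_X_pow, if_neg, mul_zero]
    intro h; exact hi (Fin.ext h.symm)
  · intro h; exact absurd (Finset.mem_univ _) h

lemma coefOf_eq_of_le {F : Type*} [Field F] {n j : ℕ} (h1 : 1 ≤ j) (h2 : j ≤ n)
    (c : Fin n → F) : coefOf n c j = c ⟨n - j, by omega⟩ := by
  unfold coefOf
  rw [if_pos h2, polyOf_coeff n c (n - j) (by omega)]

lemma coefOf_gt {F : Type*} [Field F] {n j : ℕ} (h : n < j) (c : Fin n → F) :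
    coefOf n c j = 0 := if_neg (by omega)

lemma sum_mulHom_eq_zero {F : Type} [Field F] [Fintype F] (θ : F → ℂ)
    (hadd : ∀ x y, θ (x + y) = θ x * θ y) (x0 : F) (hx0 : θ x0 ≠ 1) :
    ∑ x : F, θ x = 0 := by
  have h : ∑ x : F, θ (x0 + x) = ∑ x : F, θ x := Equiv.sum_comp (Equiv.addLeft x0) θ
  simp only [hadd, ← Finset.mul_sum] at h
  have h2 : (θ x0 - 1) * ∑ x : F, θ x = 0 := by linear_combination h
  rcases mul_eq_zero.mp h2 with h3 | h3
  · exact absurd (by linear_combination h3) hx0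
  · exact h3

/-- For `q = 2^r` and a primitive character `χ` of the group `F_q³`
(with the indicated law), the `L`-function coefficients satisfy `c_n(χ) = 0` for
`n ≥ 3`, and every root `z` of `1 + c₁(χ)z + c₂(χ)z²` satisfies `q^{12} z^{24} = 1`,
i.e. the inverse roots divided by `√q` are 24-th roots of unity. -/
theorem char2_Lfunction_roots (r : ℕ) (hr : 1 ≤ r)
    {F : Type} [Field F] [Fintype F] (hF : Fintype.card F = 2 ^ r)
    (χ : F → F → F → ℂ)
    (hne : ∀ a1 a2 a3, χ a1 a2 a3 ≠ 0)
    (hmul : ∀ a1 a2 a3 b1 b2 b3 : F,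
      χ (a1 + b1) (a2 + a1 * b1 + b2) (a3 + a1 * b2 + a2 * b1 + b3)
        = χ a1 a2 a3 * χ b1 b2 b3)
    (hprim : ∃ c : F, χ 0 0 c ≠ 1) :
    (∀ n : ℕ, 3 ≤ n → charSum3 χ n = 0)
    ∧ (∀ z : ℂ, 1 + charSum3 χ 1 * z + charSum3 χ 2 * z ^ 2 = 0 →
        ((2 : ℂ) ^ r) ^ (12 : ℕ) * z ^ (24 : ℕ) = 1) := by

  classical
  -- characteristic 2
  obtain ⟨p, hcp⟩ := CharP.exists F
  obtain ⟨n0, hpp, hcard⟩ := FiniteField.card F p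
  have hp2 : p = 2 := by
    have hdvd : p ∣ 2 ^ r := by
      rw [← hF, hcard]; exact dvd_pow_self p n0.pos.ne'
    exact (Nat.prime_dvd_prime_iff_eq hpp Nat.prime_two).mp (hpp.dvd_of_dvd_pow hdvd)
  subst hp2
  have h2 : (2 : F) = 0 := by exact_mod_cast CharP.cast_eq_zero F 2
  have hadd_self : ∀ x : F, x + x = 0 := fun x => by linear_combination x * h2
  have hq : (Fintype.card F : ℂ) = (2:ℂ)^r := by rw [hF]; push_cast; ring
  have hqne : (Fintype.card F : ℂ) ≠ 0 := by rw [hq]; exact pow_ne_zero _ two_ne_zero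
  have hfrob : ∀ y : F, ∃ t : F, t * t = y := by
    have inj : Function.Injective (fun x : F => x * x) := by
      intro x y hxy
      simp only at hxy
      have h0 : (x + y) * (x + y) = 0 := by linear_combination hxy + (x*y + y*y) * h2
      have h1 : x + y = 0 := by
        rcases mul_eq_zero.mp h0 with h | h <;> exact h
      linear_combination h1 - y * h2
    exact Finite.surjective_of_injective inj
  -- character basics
  have hs0 : χ 0 0 0 = 1 := by
    have h := hmul 0 0 0 0 0 0
    simp only [add_zero, zero_add, mul_zero, zero_mul] at h
    exact mul_left_cancel₀ (hne 0 0 0) (by rw [mul_one]; exact h.symm)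
  have ψ3add : ∀ x y : F, χ 0 0 (x + y) = χ 0 0 x * χ 0 0 y := fun x y => by
    have h := hmul 0 0 x 0 0 y; simpa using h
  have ψ3sq : ∀ x : F, χ 0 0 x * χ 0 0 x = 1 := fun x => by
    rw [← ψ3add x x, hadd_self, hs0]
  have ψ2add : ∀ x y : F, χ 0 (x + y) 0 = χ 0 x 0 * χ 0 y 0 := fun x y => by
    have h := hmul 0 x 0 0 y 0; simpa using h
  have ψ2sq : ∀ x : F, χ 0 x 0 * χ 0 x 0 = 1 := fun x => by
    rw [← ψ2add x x, hadd_self, hs0]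
  have hψ2ψ3 : ∀ B C : F, χ 0 B C = χ 0 B 0 * χ 0 0 C := fun B C => by
    have h := hmul 0 B 0 0 0 C; simpa using h
  have hsplit : ∀ A B C : F, χ A B C = χ A 0 0 * (χ 0 B 0 * χ 0 0 (C + A*B)) := by
    intro A B C
    have h := hmul A 0 0 0 B (C + A*B)
    simp only [add_zero, zero_add, mul_zero, zero_mul] at h
    rw [show A*B + (C + A*B) = C from by linear_combination (A*B) * h2] at h
    rw [h, hψ2ψ3]
  -- nondegeneracy
  obtain ⟨cc, hcc⟩ := hprim
  have hND0 : ∀ d : F, d ≠ 0 → ∑ a : F, χ 0 0 (d * a) = 0 := by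
    intro d hd
    apply sum_mulHom_eq_zero (fun a => χ 0 0 (d*a)) ?_ (d⁻¹ * cc) ?_
    · intro x y
      show χ 0 0 (d*(x+y)) = χ 0 0 (d*x) * χ 0 0 (d*y)
      rw [show d*(x+y) = d*x + d*y from by ring, ψ3add]
    · show χ 0 0 (d * (d⁻¹ * cc)) ≠ 1
      rw [show d * (d⁻¹ * cc) = cc from by field_simp]; exact hcc
  have hNDeq : ∀ d : F, (∀ a : F, χ 0 0 (a * d) = 1) → d = 0 := by
    intro d hall
    by_contra hd
    have h' := hall (d⁻¹ * cc)
    rw [show (d⁻¹ * cc) * d = cc from by field_simp] at h'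
    exact hcc h'
  -- existence of μ with ψ2 = ψ3(μ ·)
  have hμex : ∃ μ : F, ∀ b : F, χ 0 b 0 = χ 0 0 (μ * b) := by
    have htot : ∑ a : F, ∑ b : F, χ 0 b 0 * χ 0 0 (a*b) = (Fintype.card F : ℂ) := by
      rw [Finset.sum_comm]
      have step : ∀ b : F, ∑ a : F, χ 0 b 0 * χ 0 0 (a*b)
          = if b = 0 then (Fintype.card F : ℂ) else 0 := by
        intro b
        by_cases hb : b = 0
        · subst hb; simp [hs0]
        · rw [if_neg hb, ← Finset.mul_sum]
          have : ∑ a : F, χ 0 0 (b * a) = 0 := hND0 b hb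
          rw [show (∑ a : F, χ 0 0 (a*b)) = ∑ a : F, χ 0 0 (b*a) from by
            exact Finset.sum_congr rfl fun a _ => by rw [mul_comm], this, mul_zero]
      rw [Finset.sum_congr rfl fun b _ => step b, Finset.sum_ite_eq' Finset.univ (0:F)
        (fun _ => (Fintype.card F : ℂ)), if_pos (Finset.mem_univ 0)]
    have hex : ∃ a : F, ∑ b : F, χ 0 b 0 * χ 0 0 (a*b) ≠ 0 := by
      by_contra hno
      push_neg at hno
      rw [Finset.sum_congr rfl fun a _ => hno a, Finset.sum_const, smul_zero] at htot
      exact hqne htot.symm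
    obtain ⟨μ, hμ0⟩ := hex
    have hall : ∀ b : F, χ 0 b 0 * χ 0 0 (μ*b) = 1 := by
      by_contra hnall
      push_neg at hnall
      obtain ⟨b0, hb0⟩ := hnall
      refine hμ0 (sum_mulHom_eq_zero _ ?_ b0 hb0)
      intro x y
      rw [show μ*(x+y) = μ*x + μ*y from by ring, ψ3add, ψ2add]; ring
    refine ⟨μ, fun b => ?_⟩
    calc χ 0 b 0 = χ 0 b 0 * (χ 0 0 (μ*b) * χ 0 0 (μ*b)) := by rw [ψ3sq, mul_one]
      _ = (χ 0 b 0 * χ 0 0 (μ*b)) * χ 0 0 (μ*b) := by ring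
      _ = χ 0 0 (μ*b) := by rw [hall b, one_mul]
  obtain ⟨μ, hμ⟩ := hμex
  -- φ multiplicativity facts
  have hφφ : ∀ a b : F, χ (a+b) (a*b) 0 = χ a 0 0 * χ b 0 0 := fun a b => by
    have h := hmul a 0 0 b 0 0; simpa using h
  have hφsq : ∀ a : F, χ a 0 0 * χ a 0 0 = χ 0 (a*a) 0 := fun a => by
    rw [← hφφ a a, hadd_self]
  have hu4 : χ μ 0 0 ^ 4 = 1 := by
    calc χ μ 0 0 ^ 4 = (χ μ 0 0 * χ μ 0 0) * (χ μ 0 0 * χ μ 0 0) := by ring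
      _ = χ 0 (μ*μ) 0 * χ 0 (μ*μ) 0 := by rw [hφsq]
      _ = 1 := ψ2sq _
  have hxi : ∀ a : F, χ a (a*a) (a*a*a) = χ a 0 0 * χ 0 0 (μ*(a*a)) := by
    intro a
    rw [hsplit a (a*a) (a*a*a),
      show a*a*a + a*(a*a) = 0 from by linear_combination (a*a*a)*h2, hs0, mul_one, hμ]
  have hFE : ∀ a : F, χ (a+μ) 0 0 = χ μ 0 0 * χ a (a*a) (a*a*a) := by
    intro a
    have E : χ a 0 0 * χ μ 0 0 = χ (a+μ) 0 0 * χ 0 0 (μ*(a*a)) := by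
      rw [← hφφ a μ, hsplit (a+μ) (a*μ) 0, hμ (a*μ), ← ψ3add,
        show μ*(a*μ) + (0 + (a+μ)*(a*μ)) = μ*(a*a) from by linear_combination (a*μ*μ)*h2]
    calc χ (a+μ) 0 0 = (χ (a+μ) 0 0 * χ 0 0 (μ*(a*a))) * χ 0 0 (μ*(a*a)) := by
          rw [mul_assoc, ψ3sq, mul_one]
      _ = (χ a 0 0 * χ μ 0 0) * χ 0 0 (μ*(a*a)) := by rw [← E]
      _ = χ μ 0 0 * (χ a 0 0 * χ 0 0 (μ*(a*a))) := by ring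
      _ = χ μ 0 0 * χ a (a*a) (a*a*a) := by rw [← hxi a]
  have hc1FE : ∑ a : F, χ a 0 0 = χ μ 0 0 * ∑ a : F, χ a (a*a) (a*a*a) := by
    have h := Equiv.sum_comp (Equiv.addRight μ) (fun a : F => χ a 0 0)
    simp only [Equiv.coe_addRight] at h
    rw [← h]
    simp only [hFE]
    rw [← Finset.mul_sum]
  -- values of charSum3 1 and 2
  have hc1v : charSum3 χ 1 = ∑ a : F, χ a 0 0 := by
    unfold charSum3
    have hcf : ∀ c : Fin 1 → F,
        χ (coefOf 1 c 1) (coefOf 1 c 2) (coefOf 1 c 3) = χ (c 0) 0 0 := by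
      intro c
      rw [coefOf_eq_of_le le_rfl le_rfl, coefOf_gt (by norm_num), coefOf_gt (by norm_num)]
      rfl
    rw [Finset.sum_congr rfl fun c _ => hcf c]
    exact Fintype.sum_equiv (Equiv.funUnique (Fin 1) F) _ _ (fun c => rfl)
  have hc2v : charSum3 χ 2 = ∑ a : F, ∑ b : F, χ a b 0 := by
    unfold charSum3
    have hcf : ∀ c : Fin 2 → F,
        χ (coefOf 2 c 1) (coefOf 2 c 2) (coefOf 2 c 3) = χ (c 1) (c 0) 0 := by
      intro c
      rw [coefOf_eq_of_le (by norm_num) (by norm_num),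
        coefOf_eq_of_le (by norm_num) (by norm_num), coefOf_gt (by norm_num)]
      rfl
    rw [Finset.sum_congr rfl fun c _ => hcf c]
    exact (Fintype.sum_equiv (piFinTwoEquiv (fun _ => F)) _ (fun p => χ p.2 p.1 0)
      (fun c => rfl)).trans (by rw [Fintype.sum_prod_type]; exact Finset.sum_comm)
  have hc2 : charSum3 χ 2 = (Fintype.card F : ℂ) * χ μ 0 0 := by
    rw [hc2v]
    have inner : ∀ a : F, ∑ b : F, χ 0 b 0 * χ 0 0 (a*b)
        = if a = μ then (Fintype.card F : ℂ) else 0 := by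
      intro a
      by_cases ha : a = μ
      · rw [if_pos ha]; subst ha
        have : ∀ b : F, χ 0 b 0 * χ 0 0 (a*b) = 1 := fun b => by rw [hμ b, ψ3sq]
        rw [Finset.sum_congr rfl fun b _ => this b]; simp
      · rw [if_neg ha]
        have hne0 : μ + a ≠ 0 := fun hh => ha (by linear_combination hh - μ*h2)
        calc ∑ b : F, χ 0 b 0 * χ 0 0 (a*b)
            = ∑ b : F, χ 0 0 ((μ+a)*b) := Finset.sum_congr rfl (fun b _ => by
              rw [hμ b, ← ψ3add, show μ*b + a*b = (μ+a)*b from by ring])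
          _ = 0 := hND0 (μ+a) hne0
    calc ∑ a : F, ∑ b : F, χ a b 0
        = ∑ a : F, χ a 0 0 * ∑ b : F, χ 0 b 0 * χ 0 0 (a*b) := by
          refine Finset.sum_congr rfl fun a _ => ?_
          rw [Finset.mul_sum]
          refine Finset.sum_congr rfl fun b _ => ?_
          rw [hsplit a b 0, zero_add]
      _ = ∑ a : F, χ a 0 0 * (if a = μ then (Fintype.card F : ℂ) else 0) := by
          exact Finset.sum_congr rfl fun a _ => by rw [inner a]
      _ = (Fintype.card F : ℂ) * χ μ 0 0 := by
          rw [Finset.sum_eq_single μ]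
          · rw [if_pos rfl]; ring
          · intro b _ hb; rw [if_neg hb, mul_zero]
          · intro h; exact absurd (Finset.mem_univ μ) h
  -- the radical predicate
  set P : F → Prop := fun h => ∀ a : F, χ 0 0 (μ*(a*h) + a*(h*h) + a*a*h) = 1 with hPdef
  set A : Finset F := Finset.univ.filter P with hAdef
  set S : ℂ := ∑ h ∈ A, χ h (h*h) (h*h*h) with hSdef
  -- key pointwise identity
  have hkey : ∀ a h : F, χ a 0 0 * χ (a+h) ((a+h)*(a+h)) ((a+h)*(a+h)*(a+h))
      = χ h (h*h) (h*h*h) * χ 0 0 (μ*(a*h) + a*(h*h) + a*a*h) := by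
    intro a h
    have p := hmul a 0 0 (a+h) ((a+h)*(a+h)) ((a+h)*(a+h)*(a+h))
    rw [show a + (a+h) = h from by linear_combination a*h2,
      show 0 + a*(a+h) + (a+h)*(a+h) = a*h + h*h from by
        linear_combination (a*a + a*h)*h2,
      show 0 + a*((a+h)*(a+h)) + 0*(a+h) + (a+h)*(a+h)*(a+h) = a*a*h + h*h*h from by
        linear_combination (a*a*a + 2*(a*a*h) + 2*(a*h*h))*h2] at p
    rw [← p, hsplit h (a*h+h*h) (a*a*h+h*h*h), hμ (a*h+h*h), ← ψ3add,
      show μ*(a*h+h*h) + (a*a*h+h*h*h + h*(a*h+h*h)) =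
        μ*(h*h) + (μ*(a*h) + a*(h*h) + a*a*h) from by linear_combination (h*h*h)*h2,
      ψ3add, hxi h]
    ring
  have hGsum : ∀ h : F, (∑ a : F, χ 0 0 (μ*(a*h) + a*(h*h) + a*a*h))
      = if P h then (Fintype.card F : ℂ) else 0 := by
    intro h
    by_cases hP : P h
    · rw [if_pos hP, Finset.sum_congr rfl fun a _ => hP a]; simp
    · rw [if_neg hP]
      have hP' : ¬ ∀ a : F, χ 0 0 (μ*(a*h) + a*(h*h) + a*a*h) = 1 := hP
      push_neg at hP'
      obtain ⟨a0, ha0⟩ := hP'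
      refine sum_mulHom_eq_zero _ ?_ a0 ha0
      intro x y
      show χ 0 0 (μ*((x+y)*h) + (x+y)*(h*h) + (x+y)*(x+y)*h) = _
      rw [show μ*((x+y)*h) + (x+y)*(h*h) + (x+y)*(x+y)*h
          = (μ*(x*h) + x*(h*h) + x*x*h) + (μ*(y*h) + y*(h*h) + y*y*h) from by
          linear_combination (x*y*h)*h2, ψ3add]
  have hprod : (∑ a : F, χ a 0 0) * (∑ b : F, χ b (b*b) (b*b*b))
      = (Fintype.card F : ℂ) * S := by
    rw [Fintype.sum_mul_sum]
    calc ∑ a : F, ∑ b : F, χ a 0 0 * χ b (b*b) (b*b*b)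
        = ∑ a : F, ∑ h : F, χ a 0 0 * χ (a+h) ((a+h)*(a+h)) ((a+h)*(a+h)*(a+h)) := by
          refine Finset.sum_congr rfl fun a _ => ?_
          exact (Equiv.sum_comp (Equiv.addLeft a)
            (fun b => χ a 0 0 * χ b (b*b) (b*b*b))).symm
      _ = ∑ a : F, ∑ h : F, χ h (h*h) (h*h*h) * χ 0 0 (μ*(a*h) + a*(h*h) + a*a*h) := by
          exact Finset.sum_congr rfl fun a _ => Finset.sum_congr rfl fun h _ => hkey a h
      _ = ∑ h : F, χ h (h*h) (h*h*h) * ∑ a : F, χ 0 0 (μ*(a*h) + a*(h*h) + a*a*h) := by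
          rw [Finset.sum_comm]
          exact Finset.sum_congr rfl fun h _ => (Finset.mul_sum _ _ _).symm
      _ = ∑ h : F, (if P h then χ h (h*h) (h*h*h) * (Fintype.card F : ℂ) else 0) := by
          refine Finset.sum_congr rfl fun h _ => ?_
          rw [hGsum h]
          by_cases hP : P h
          · rw [if_pos hP, if_pos hP]
          · rw [if_neg hP, if_neg hP, mul_zero]
      _ = ∑ h ∈ A, χ h (h*h) (h*h*h) * (Fintype.card F : ℂ) := by
          rw [hAdef, Finset.sum_filter]
      _ = (Fintype.card F : ℂ) * S := by
          rw [hSdef, ← Finset.sum_mul]; ring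
  -- closure of the radical under addition
  have hPadd : ∀ h h' : F, P h → P h' → P (h + h') := by
    intro h h' H H' a
    show χ 0 0 (μ*(a*(h+h')) + a*((h+h')*(h+h')) + a*a*(h+h')) = 1
    rw [show μ*(a*(h+h')) + a*((h+h')*(h+h')) + a*a*(h+h')
        = (μ*(a*h) + a*(h*h) + a*a*h) + (μ*(a*h') + a*(h'*h') + a*a*h') from by
        linear_combination (a*h*h')*h2, ψ3add, H a, H' a, mul_one]
  -- ξ is a homomorphism on the radical
  have hξhom : ∀ h h' : F, P h → P h' →
      χ (h+h') ((h+h')*(h+h')) ((h+h')*(h+h')*(h+h'))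
        = χ h (h*h) (h*h*h) * χ h' (h'*h') (h'*h'*h') := by
    intro h h' H H'
    have E : χ h 0 0 * χ h' 0 0
        = χ (h+h') 0 0 * (χ 0 (h*h') 0 * χ 0 0 (0 + (h+h')*(h*h'))) := by
      rw [← hφφ h h', hsplit (h+h') (h*h') 0]
    have hss : (χ 0 (h*h') 0 * χ 0 0 (0 + (h+h')*(h*h')))
        * (χ 0 (h*h') 0 * χ 0 0 (0 + (h+h')*(h*h'))) = 1 := by
      calc _ = (χ 0 (h*h') 0 * χ 0 (h*h') 0)
            * (χ 0 0 (0 + (h+h')*(h*h')) * χ 0 0 (0 + (h+h')*(h*h'))) := by ring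
        _ = 1 := by rw [ψ2sq, ψ3sq, mul_one]
    have E2 : χ (h+h') 0 0 = (χ h 0 0 * χ h' 0 0)
        * (χ 0 (h*h') 0 * χ 0 0 (0 + (h+h')*(h*h'))) := by
      calc χ (h+h') 0 0
          = (χ (h+h') 0 0 * (χ 0 (h*h') 0 * χ 0 0 (0 + (h+h')*(h*h'))))
            * (χ 0 (h*h') 0 * χ 0 0 (0 + (h+h')*(h*h'))) := by
            rw [mul_assoc, hss, mul_one]
        _ = _ := by rw [← E]
    have hψ : χ 0 0 (μ*(h*h')) * (χ 0 0 (0 + (h+h')*(h*h')) * χ 0 0 (μ*((h+h')*(h+h'))))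
        = χ 0 0 (μ*(h*h)) * χ 0 0 (μ*(h'*h')) := by
      rw [← ψ3add, ← ψ3add, ← ψ3add,
        show μ*(h*h') + ((0 + (h+h')*(h*h')) + μ*((h+h')*(h+h')))
          = (μ*(h*h) + μ*(h'*h')) + (μ*(h*h') + h*(h'*h') + h*h*h') from by
          linear_combination (μ*h*h')*h2,
        ψ3add, H' h, mul_one]
    rw [hxi (h+h'), hxi h, hxi h', E2, hμ (h*h')]
    linear_combination (χ h 0 0 * χ h' 0 0) * hψ
  -- S is either 0 or the cardinality of the radical
  have hS : S = 0 ∨ S = (A.card : ℂ) := by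
    by_cases hall : ∀ h ∈ A, χ h (h*h) (h*h*h) = 1
    · right
      rw [hSdef, Finset.sum_congr rfl hall, Finset.sum_const, nsmul_eq_mul, mul_one]
    · left
      push_neg at hall
      obtain ⟨h0, hh0A, hh0⟩ := hall
      have hh0P : P h0 := (Finset.mem_filter.mp (hAdef ▸ hh0A)).2
      have hmem : ∀ i : F, i ∈ A ↔ i + h0 ∈ A := by
        intro i
        constructor
        · intro hi
          rw [hAdef, Finset.mem_filter]
          exact ⟨Finset.mem_univ _, hPadd i h0 ((Finset.mem_filter.mp (hAdef ▸ hi)).2) hh0P⟩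
        · intro hi
          have : (i + h0) + h0 = i := by linear_combination h0*h2
          have h3 : P ((i+h0) + h0) := hPadd _ h0 ((Finset.mem_filter.mp (hAdef ▸ hi)).2) hh0P
          rw [this] at h3
          rw [hAdef, Finset.mem_filter]
          exact ⟨Finset.mem_univ _, h3⟩
      have hshift : ∑ i ∈ A, χ (i+h0) ((i+h0)*(i+h0)) ((i+h0)*(i+h0)*(i+h0))
          = ∑ i ∈ A, χ i (i*i) (i*i*i) := by
        exact Finset.sum_equiv (Equiv.addRight h0) (by
          intro i; simpa using hmem i) (fun i _ => rfl)
      have hstep : ∀ i ∈ A, χ (i+h0) ((i+h0)*(i+h0)) ((i+h0)*(i+h0)*(i+h0))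
          = χ i (i*i) (i*i*i) * χ h0 (h0*h0) (h0*h0*h0) :=
        fun i hi => hξhom i h0 ((Finset.mem_filter.mp (hAdef ▸ hi)).2) hh0P
      rw [Finset.sum_congr rfl hstep, ← Finset.sum_mul] at hshift
      have : S * (χ h0 (h0*h0) (h0*h0*h0) - 1) = 0 := by
        rw [hSdef]; linear_combination hshift
      rcases mul_eq_zero.mp this with h | h
      · exact h
      · exact absurd (by linear_combination h) hh0
  -- key algebraic consequence of membership in the radical
  have q3 : ∀ w : F, P w → ∀ a : F, χ 0 0 (a*a*w) = χ 0 0 (μ*(a*w) + a*(w*w)) := by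
    intro w Hw a
    have h := Hw a
    have hsplit2 : χ 0 0 (μ*(a*w) + a*(w*w)) * χ 0 0 (a*a*w) = 1 := by
      rw [← ψ3add]; exact h
    calc χ 0 0 (a*a*w)
        = (χ 0 0 (μ*(a*w) + a*(w*w)) * χ 0 0 (μ*(a*w) + a*(w*w))) * χ 0 0 (a*a*w) := by
          rw [ψ3sq, one_mul]
      _ = χ 0 0 (μ*(a*w) + a*(w*w)) * (χ 0 0 (μ*(a*w) + a*(w*w)) * χ 0 0 (a*a*w)) := by
          ring
      _ = χ 0 0 (μ*(a*w) + a*(w*w)) := by rw [hsplit2, mul_one]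
  have keyA : ∀ x t : F, P x → P (t*t*x) →
      μ*(t*t*x) + (t*t*x)*(t*t*x) = t*(μ*x + x*x) := by
    intro x t Hx Hxt
    have hXY : ∀ a : F, χ 0 0 (a*(μ*(t*t*x) + (t*t*x)*(t*t*x)))
        = χ 0 0 (a*(t*(μ*x + x*x))) := by
      intro a
      calc χ 0 0 (a*(μ*(t*t*x) + (t*t*x)*(t*t*x)))
          = χ 0 0 (μ*(a*(t*t*x)) + a*((t*t*x)*(t*t*x))) := by
            rw [show a*(μ*(t*t*x) + (t*t*x)*(t*t*x))
              = μ*(a*(t*t*x)) + a*((t*t*x)*(t*t*x)) from by ring]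
        _ = χ 0 0 (a*a*(t*t*x)) := (q3 (t*t*x) Hxt a).symm
        _ = χ 0 0 ((a*t)*(a*t)*x) := by rw [show a*a*(t*t*x) = (a*t)*(a*t)*x from by ring]
        _ = χ 0 0 (μ*((a*t)*x) + (a*t)*(x*x)) := q3 x Hx (a*t)
        _ = χ 0 0 (a*(t*(μ*x + x*x))) := by
            rw [show μ*((a*t)*x) + (a*t)*(x*x) = a*(t*(μ*x + x*x)) from by ring]
    have hz : ∀ a : F, χ 0 0 (a*((μ*(t*t*x) + (t*t*x)*(t*t*x)) + t*(μ*x + x*x))) = 1 := by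
      intro a
      rw [show a*((μ*(t*t*x) + (t*t*x)*(t*t*x)) + t*(μ*x + x*x))
        = a*(μ*(t*t*x) + (t*t*x)*(t*t*x)) + a*(t*(μ*x + x*x)) from by ring,
        ψ3add, hXY a, ψ3sq]
    have h0 := hNDeq ((μ*(t*t*x) + (t*t*x)*(t*t*x)) + t*(μ*x + x*x)) (fun a => by
      exact hz a)
    linear_combination h0 - (t*(μ*x + x*x))*h2
  -- the radical has at most 4 elements
  have hcard4 : A.card ≤ 4 := by
    by_contra hgt
    push_neg at hgt
    have h5 : 5 ≤ A.card := hgt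
    have hc1' : 4 ≤ (A.erase 0).card := by
      have := Finset.pred_card_le_card_erase (a := (0:F)) (s := A)
      omega
    obtain ⟨h0, hh0⟩ := Finset.card_pos.mp (by omega : 0 < (A.erase 0).card)
    have hc2' : 3 ≤ ((A.erase 0).erase h0).card := by
      have := Finset.pred_card_le_card_erase (a := h0) (s := A.erase 0)
      omega
    obtain ⟨h1, hh1⟩ := Finset.card_pos.mp (by omega : 0 < ((A.erase 0).erase h0).card)
    have hc3' : 2 ≤ (((A.erase 0).erase h0).erase h1).card := by
      have := Finset.pred_card_le_card_erase (a := h1) (s := (A.erase 0).erase h0)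
      omega
    obtain ⟨h2', hh2⟩ := Finset.card_pos.mp (by omega : 0 < (((A.erase 0).erase h0).erase h1).card)
    have hc4' : 1 ≤ ((((A.erase 0).erase h0).erase h1).erase h2').card := by
      have := Finset.pred_card_le_card_erase (a := h2') (s := ((A.erase 0).erase h0).erase h1)
      omega
    obtain ⟨h3', hh3⟩ := Finset.card_pos.mp (by omega : 0 < ((((A.erase 0).erase h0).erase h1).erase h2').card)
    -- unpack memberships
    have m0 : h0 ∈ A.erase 0 := hh0
    have m1 : h1 ∈ A.erase 0 := (Finset.mem_erase.mp hh1).2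
    have m2 : h2' ∈ A.erase 0 := (Finset.mem_erase.mp ((Finset.mem_erase.mp hh2).2)).2
    have n10 : h1 ≠ h0 := (Finset.mem_erase.mp hh1).1
    have m3 : h3' ∈ A.erase 0 :=
      (Finset.mem_erase.mp ((Finset.mem_erase.mp ((Finset.mem_erase.mp hh3).2)).2)).2
    have n21 : h2' ≠ h1 := (Finset.mem_erase.mp hh2).1
    have n20 : h2' ≠ h0 := (Finset.mem_erase.mp ((Finset.mem_erase.mp hh2).2)).1
    have n32 : h3' ≠ h2' := (Finset.mem_erase.mp hh3).1
    have n31 : h3' ≠ h1 := (Finset.mem_erase.mp ((Finset.mem_erase.mp hh3).2)).1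
    have n30 : h3' ≠ h0 :=
      (Finset.mem_erase.mp ((Finset.mem_erase.mp ((Finset.mem_erase.mp hh3).2)).2)).1
    have hz0 : h0 ≠ 0 := (Finset.mem_erase.mp m0).1
    have hz1 : h1 ≠ 0 := (Finset.mem_erase.mp m1).1
    have hz2 : h2' ≠ 0 := (Finset.mem_erase.mp m2).1
    have hz3 : h3' ≠ 0 := (Finset.mem_erase.mp m3).1
    have P0 : P h0 := (Finset.mem_filter.mp (hAdef ▸ (Finset.mem_erase.mp m0).2)).2
    have P1 : P h1 := (Finset.mem_filter.mp (hAdef ▸ (Finset.mem_erase.mp m1).2)).2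
    have P2 : P h2' := (Finset.mem_filter.mp (hAdef ▸ (Finset.mem_erase.mp m2).2)).2
    have P3 : P h3' := (Finset.mem_filter.mp (hAdef ▸ (Finset.mem_erase.mp m3).2)).2
    -- square roots
    have getV : ∀ hi : F, hi ≠ 0 → hi ≠ h0 → P hi →
        ∃ t : F, t*t*h0 = hi ∧ h0*(t*t + t + 1) + μ = 0 := by
      intro hi hzi hnei Pi
      obtain ⟨t, ht⟩ := hfrob (hi * h0⁻¹)
      have htt : t*t*h0 = hi := by
        rw [ht]; field_simp
      have Ptt : P (t*t*h0) := by rw [htt]; exact Pi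
      have E := keyA h0 t P0 Ptt
      have hfac : t*h0*(t+1)*(h0*(t*t+t+1) + μ) = 0 := by
        linear_combination E + (h0*h0*t*t*t + h0*h0*t*t + h0*h0*t + μ*h0*t)*h2
      have htne : t ≠ 0 := by
        intro h; rw [h] at htt; simp at htt; exact hzi htt.symm
      have ht1 : t + 1 ≠ 0 := by
        intro h
        have : t = 1 := by linear_combination h - h2
        rw [this] at htt; simp at htt; exact hnei htt.symm
      refine ⟨t, htt, ?_⟩
      rcases mul_eq_zero.mp hfac with h | h
      · exfalso
        rcases mul_eq_zero.mp h with h' | h'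
        · rcases mul_eq_zero.mp h' with h'' | h''
          · exact htne h''
          · exact hz0 h''
        · exact ht1 h'
      · exact h
    obtain ⟨t1, ht1a, V1⟩ := getV h1 hz1 n10 P1
    obtain ⟨t2, ht2a, V2⟩ := getV h2' hz2 n20 P2
    have tne : t1 ≠ t2 := by
      intro h; rw [h, ht2a] at ht1a; exact n21 ht1a
    have W : h0 * ((t1+t2)*((t1+t2)+1)) = 0 := by
      linear_combination V1 - V2 + (h0*(t1*t2 + t2*t2 + t2))*h2
    obtain ⟨t3, ht3a, V3⟩ := getV h3' hz3 n30 P3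
    have tne13 : t1 ≠ t3 := by
      intro h; rw [h, ht3a] at ht1a; exact n31 ht1a
    have tne23 : t2 ≠ t3 := by
      intro h; rw [h, ht3a] at ht2a; exact n32 ht2a
    have pairNe : ∀ ti tj : F, h0*(ti*ti + ti + 1) + μ = 0 → h0*(tj*tj + tj + 1) + μ = 0 →
        ti ≠ tj → tj = ti + 1 := by
      intro ti tj Vi Vj hne'
      have W : h0 * ((ti+tj)*((ti+tj)+1)) = 0 := by
        linear_combination Vi - Vj + (h0*(ti*tj + tj*tj + tj))*h2
      rcases mul_eq_zero.mp W with h | h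
      · exact absurd h hz0
      · rcases mul_eq_zero.mp h with h' | h'
        · exact absurd (by linear_combination h' - tj*h2 : ti = tj) hne'
        · linear_combination h' - h2 - ti*h2
    have e2 : t2 = t1 + 1 := pairNe t1 t2 V1 V2 tne
    have e3 : t3 = t1 + 1 := pairNe t1 t3 V1 V3 tne13
    exact tne23 (e2.trans e3.symm)
  have hc1sq : (∑ a : F, χ a 0 0) * (∑ a : F, χ a 0 0)
      = χ μ 0 0 * ((Fintype.card F : ℂ) * S) := by
    calc (∑ a : F, χ a 0 0) * (∑ a : F, χ a 0 0)
        = (χ μ 0 0 * ∑ a : F, χ a (a*a) (a*a*a)) * (∑ a : F, χ a 0 0) := by rw [← hc1FE]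
      _ = χ μ 0 0 * ((∑ a : F, χ a 0 0) * (∑ b : F, χ b (b*b) (b*b*b))) := by ring
      _ = _ := by rw [hprod]
  have hu12 : (χ μ 0 0)^(12:ℕ) = 1 := by
    calc (χ μ 0 0)^(12:ℕ) = ((χ μ 0 0)^4)^3 := by ring
      _ = 1 := by rw [hu4]; norm_num
  have hSval : S = 0 ∨ S = 1 ∨ S = 2 ∨ S = 3 ∨ S = 4 := by
    rcases hS with h | h
    · exact Or.inl h
    · have h4 := hcard4
      have hcases : A.card = 0 ∨ A.card = 1 ∨ A.card = 2 ∨ A.card = 3 ∨ A.card = 4 := by omega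
      rcases hcases with h0 | h0 | h0 | h0 | h0 <;> rw [h0] at h <;> norm_num at h <;> tauto
  -- the two parts
  have part2 : ∀ z : ℂ, 1 + charSum3 χ 1 * z + charSum3 χ 2 * z ^ 2 = 0 →
      ((2 : ℂ) ^ r) ^ (12 : ℕ) * z ^ (24 : ℕ) = 1 := by
    intro z hz
    rw [hc1v, hc2] at hz
    have h1 : 1 + (Fintype.card F : ℂ) * χ μ 0 0 * z^2 = -((∑ a : F, χ a 0 0) * z) := by
      linear_combination hz
    have key : (1 + (Fintype.card F : ℂ) * χ μ 0 0 * z^2)^2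
        = χ μ 0 0 * (Fintype.card F : ℂ) * S * z^2 := by
      rw [h1]; linear_combination z^2 * hc1sq
    suffices hy12 : ((Fintype.card F : ℂ) * χ μ 0 0 * z^2)^(12:ℕ) = 1 by
      calc ((2:ℂ)^r)^(12:ℕ) * z^(24:ℕ)
          = (((2:ℂ)^r)^(12:ℕ) * z^(24:ℕ)) * ((χ μ 0 0)^(12:ℕ)) := by rw [hu12, mul_one]
        _ = ((2:ℂ)^r * χ μ 0 0 * z^2)^(12:ℕ) := by ring
        _ = 1 := by rw [← hq]; exact hy12
    rcases hSval with hSv | hSv | hSv | hSv | hSv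
    · rw [hSv] at key
      have h0 : (1 + (Fintype.card F : ℂ) * χ μ 0 0 * z^2)^2 = 0 := by linear_combination key
      have hlin : 1 + (Fintype.card F : ℂ) * χ μ 0 0 * z^2 = 0 :=
        pow_eq_zero_iff (by norm_num) |>.mp h0
      have hy : (Fintype.card F : ℂ) * χ μ 0 0 * z^2 = -1 := by linear_combination hlin
      rw [hy]; norm_num
    · rw [hSv] at key
      have hy3 : ((Fintype.card F : ℂ) * χ μ 0 0 * z^2)^3 = 1 := by
        linear_combination ((Fintype.card F : ℂ) * χ μ 0 0 * z^2 - 1) * key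
      calc ((Fintype.card F : ℂ) * χ μ 0 0 * z^2)^(12:ℕ)
          = (((Fintype.card F : ℂ) * χ μ 0 0 * z^2)^3)^4 := by ring
        _ = 1 := by rw [hy3]; norm_num
    · rw [hSv] at key
      have hy2 : ((Fintype.card F : ℂ) * χ μ 0 0 * z^2)^2 = -1 := by linear_combination key
      calc ((Fintype.card F : ℂ) * χ μ 0 0 * z^2)^(12:ℕ)
          = (((Fintype.card F : ℂ) * χ μ 0 0 * z^2)^2)^6 := by ring
        _ = 1 := by rw [hy2]; norm_num
    · rw [hSv] at key
      have hy3 : ((Fintype.card F : ℂ) * χ μ 0 0 * z^2)^3 = -1 := by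
        linear_combination ((Fintype.card F : ℂ) * χ μ 0 0 * z^2 + 1) * key
      calc ((Fintype.card F : ℂ) * χ μ 0 0 * z^2)^(12:ℕ)
          = (((Fintype.card F : ℂ) * χ μ 0 0 * z^2)^3)^4 := by ring
        _ = 1 := by rw [hy3]; norm_num
    · rw [hSv] at key
      have h0 : ((Fintype.card F : ℂ) * χ μ 0 0 * z^2 - 1)^2 = 0 := by linear_combination key
      have hlin : (Fintype.card F : ℂ) * χ μ 0 0 * z^2 - 1 = 0 :=
        pow_eq_zero_iff (by norm_num) |>.mp h0
      have hy : (Fintype.card F : ℂ) * χ μ 0 0 * z^2 = 1 := by linear_combination hlin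
      rw [hy]; norm_num
  have part1 : ∀ n : ℕ, 3 ≤ n → charSum3 χ n = 0 := by
    intro n hn
    unfold charSum3
    set i0 : Fin n := ⟨n-3, by omega⟩ with hi0
    set σ : (Fin n → F) → (Fin n → F) := fun c => Function.update c i0 (c i0 + cc) with hσdef
    have hinv : Function.Involutive σ := by
      intro c; funext j
      by_cases hj : j = i0
      · subst hj
        simp only [hσdef, Function.update_self]
        linear_combination cc*h2
      · simp only [hσdef, Function.update_of_ne hj]
    have hbij := hinv.bijective
    have hcoef : ∀ c : Fin n → F,
        χ (coefOf n (σ c) 1) (coefOf n (σ c) 2) (coefOf n (σ c) 3)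
          = χ (coefOf n c 1) (coefOf n c 2) (coefOf n c 3) * χ 0 0 cc := by
      intro c
      have e1 : coefOf n (σ c) 1 = coefOf n c 1 := by
        rw [coefOf_eq_of_le (by omega) (by omega), coefOf_eq_of_le (by omega) (by omega)]
        simp only [hσdef]
        refine Function.update_of_ne (Fin.ne_of_val_ne ?_) _ c
        rw [hi0]
        simp only [Fin.val_mk]
        omega
      have e2 : coefOf n (σ c) 2 = coefOf n c 2 := by
        rw [coefOf_eq_of_le (by omega) (by omega), coefOf_eq_of_le (by omega) (by omega)]
        simp only [hσdef]
        refine Function.update_of_ne (Fin.ne_of_val_ne ?_) _ c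
        rw [hi0]
        simp only [Fin.val_mk]
        omega
      have e3 : coefOf n (σ c) 3 = coefOf n c 3 + cc := by
        rw [coefOf_eq_of_le (by omega) (by omega), coefOf_eq_of_le (by omega) (by omega)]
        simp only [hσdef]
        exact Function.update_self i0 (c i0 + cc) c
      rw [e1, e2, e3]
      have h := hmul (coefOf n c 1) (coefOf n c 2) (coefOf n c 3) 0 0 cc
      simpa using h
    have hsum : ∑ c : Fin n → F,
        χ (coefOf n (σ c) 1) (coefOf n (σ c) 2) (coefOf n (σ c) 3)
        = ∑ c : Fin n → F, χ (coefOf n c 1) (coefOf n c 2) (coefOf n c 3) :=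
      Fintype.sum_bijective σ hbij _ _ (fun c => rfl)
    rw [Finset.sum_congr rfl (fun c _ => hcoef c), ← Finset.sum_mul] at hsum
    have hz : (∑ c : Fin n → F, χ (coefOf n c 1) (coefOf n c 2) (coefOf n c 3))
        * (χ 0 0 cc - 1) = 0 := by linear_combination hsum
    rcases mul_eq_zero.mp hz with h | h
    · exact h
    · exact absurd (by linear_combination h) hcc
  exact ⟨part1, part2⟩
end

section
/- Let q = p^r be a prime power with p ≥ 5 and let λ_1, λ_2, λ_3 ∈ F_q with λ_3 ≠ 0. Let χ : F_q³ → ℂ^× be the group homomorphism (for the group law (a_1,a_2,a_3)·(b_1,b_2,b_3) = (a_1+b_1, a_2+a_1b_1+b_2, a_3+a_1b_2+a_2b_1+b_3)) given by χ(a_1,a_2,a_3) = χ_q(λ_1a_1 + λ_2(a_2 − a_1²/2) + λ_3(a_3 − a_1a_2 + a_1³/3)). For n ≥ 0 let c_n(χ) = ∑_f χ(a_1(f),a_2(f),a_3(f)), summed over monic f ∈ F_q[T] of degree n, where a_j(f) is the coefficient of T^{n−j} in f. Then, with a = λ_3/3 ∈ F_q^× and b = λ_1 − λ_2²/(4λ_3)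 ∈ F_q, there exists an integer c with 0 ≤ c < p such that c_2(χ) = q · ω_p^{2c} and c_1(χ) = ω_p^c · ∑_{x ∈ F_q} χ_q(a·x³ + b·x), where ω_p = e^{2πi/p}. Equivalently, L(u/(√q·ω_p^c), χ) = 1 + (∑_{x ∈ F_q} χ_q(ax³+bx)/√q)·u + u². -/
open Polynomial Finset

/-!
Write `φ(y) = λ₁y − λ₂y²/2 + λ₃y³/3` for the phase of `χ` at `(y, 0, 0)`. At `(a₁, a₂, 0)` the
phase is `φ(a₁) + a₂(λ₂ − λ₃a₁)`, so summing over `a₂` first kills every `a₁` except the critical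
point `λ₂/λ₃`, and `c₂ = q·χ_q(φ(λ₂/λ₃))`. Translating by the inflection point `y₀ = λ₂/(2λ₃)`
turns `φ` into `a x³ + b x + φ(y₀)`, whence `c₁ = χ_q(φ(y₀))·∑ χ_q(ax³ + bx)`. The depressed cubic
is odd and `φ(0) = 0`, so `φ(λ₂/λ₃) = φ(2y₀) = 2φ(y₀)`; take `c = Tr φ(y₀)`.
-/

section CoefficientSums

variable {F : Type*} [Field F] [Fintype F]

theorem charSum3_one (χ : F → F → F → ℂ) : charSum3 χ 1 = ∑ x, χ x 0 0 :=
  Fintype.sum_equiv (Equiv.funUnique (Fin 1) F) _ _ fun c => by simp [coefOf, polyOf]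

theorem charSum3_two (χ : F → F → F → ℂ) : charSum3 χ 2 = ∑ a₁, ∑ a₂, χ a₁ a₂ 0 := by
  rw [Finset.sum_comm, ← Fintype.sum_prod_type']
  exact Fintype.sum_equiv (finTwoArrowEquiv F) _ _ fun c => by
    simp [coefOf, polyOf, Fin.sum_univ_two, coeff_X_pow]

end CoefficientSums

section CubicPhase

variable {F : Type*} [Field F]

def cubicPhase (l1 l2 l3 y : F) : F := l1 * y - l2 * y ^ 2 / 2 + l3 * y ^ 3 / 3

theorem cubicPhase_eq_depressed (h2 : (2 : F) ≠ 0) (h3 : (3 : F) ≠ 0) {l3 : F} (hl3 : l3 ≠ 0)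
    (l1 l2 y : F) :
    cubicPhase l1 l2 l3 y = l3 / 3 * (y - l2 / (2 * l3)) ^ 3
      + (l1 - l2 ^ 2 / (4 * l3)) * (y - l2 / (2 * l3)) + cubicPhase l1 l2 l3 (l2 / (2 * l3)) := by
  rw [show (4 : F) = 2 * 2 by norm_num]
  unfold cubicPhase
  field_simp
  ring

theorem cubicPhase_double_inflection (h2 : (2 : F) ≠ 0) (h3 : (3 : F) ≠ 0) {l3 : F}
    (hl3 : l3 ≠ 0) (l1 l2 : F) :
    cubicPhase l1 l2 l3 (l2 / l3) = 2 * cubicPhase l1 l2 l3 (l2 / (2 * l3)) := by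
  have hzero : cubicPhase l1 l2 l3 0 = 0 := by simp [cubicPhase]
  have h0 := cubicPhase_eq_depressed h2 h3 hl3 l1 l2 0
  have h2y := cubicPhase_eq_depressed h2 h3 hl3 l1 l2 (l2 / l3)
  have hy : l2 / l3 - l2 / (2 * l3) = l2 / (2 * l3) := by field_simp; ring
  rw [hy] at h2y
  linear_combination h2y + h0 - hzero

end CubicPhase

section CubicCharSums

variable {F : Type*} [Field F] [Fintype F] (ψ : AddChar F ℂ) (l1 l2 : F) {l3 : F}

theorem charSum3_two_cubic (hψ : ψ.IsPrimitive) (hl3 : l3 ≠ 0) :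
    charSum3 (fun a1 a2 a3 =>
        ψ (l1 * a1 + l2 * (a2 - a1 ^ 2 / 2) + l3 * (a3 - a1 * a2 + a1 ^ 3 / 3))) 2
      = Fintype.card F * ψ (cubicPhase l1 l2 l3 (l2 / l3)) := by
  classical
  have hsplit (a1 a2 : F) : l1 * a1 + l2 * (a2 - a1 ^ 2 / 2) + l3 * (0 - a1 * a2 + a1 ^ 3 / 3)
      = cubicPhase l1 l2 l3 a1 + a2 * (l2 - l3 * a1) := by unfold cubicPhase; ring
  have hcrit (a1 : F) : l2 - l3 * a1 = 0 ↔ a1 = l2 / l3 := by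
    rw [sub_eq_zero, eq_div_iff hl3, mul_comm, eq_comm]
  simp only [charSum3_two, hsplit]
  simp only [AddChar.map_add_eq_mul, ← Finset.mul_sum, AddChar.sum_mulShift _ hψ, hcrit,
    Nat.cast_ite, Nat.cast_zero, ite_mul, zero_mul, Finset.sum_ite_eq', Finset.mem_univ, if_true,
    mul_comm]

theorem charSum3_one_cubic (h2 : (2 : F) ≠ 0) (h3 : (3 : F) ≠ 0) (hl3 : l3 ≠ 0) :
    charSum3 (fun a1 a2 a3 =>
        ψ (l1 * a1 + l2 * (a2 - a1 ^ 2 / 2) + l3 * (a3 - a1 * a2 + a1 ^ 3 / 3))) 1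
      = ψ (cubicPhase l1 l2 l3 (l2 / (2 * l3))) *
          ∑ x, ψ (l3 / 3 * x ^ 3 + (l1 - l2 ^ 2 / (4 * l3)) * x) := by
  have hphase (y : F) : l1 * y + l2 * (0 - y ^ 2 / 2) + l3 * (0 - y * 0 + y ^ 3 / 3)
      = cubicPhase l1 l2 l3 y := by unfold cubicPhase; ring
  rw [charSum3_one, Finset.mul_sum]
  refine Fintype.sum_equiv (Equiv.subRight (l2 / (2 * l3))) _ _ fun y => ?_
  rw [hphase, cubicPhase_eq_depressed h2 h3 hl3, AddChar.map_add_eq_mul, mul_comm]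
  rfl

end CubicCharSums

section TraceCharacter

variable (p r : ℕ) [Fact p.Prime]

noncomputable def traceAddChar : AddChar (GaloisField p r) ℂ :=
  ZMod.stdAddChar.compAddMonoidHom (Algebra.trace (ZMod p) (GaloisField p r)).toAddMonoidHom

theorem traceChar_eq_traceAddChar (x : GaloisField p r) :
    traceChar p r x = traceAddChar p r x := by
  simp [traceChar, traceAddChar, ZMod.stdAddChar_apply, ZMod.toCircle_apply]

theorem traceAddChar_apply (x : GaloisField p r) :
    traceAddChar p r x
      = Complex.exp (2 * Real.pi * Complex.I / p) ^ (Algebra.trace (ZMod p) _ x).val := by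
  rw [← traceChar_eq_traceAddChar, traceChar, ← Complex.exp_nat_mul]
  ring_nf

theorem traceAddChar_isPrimitive : (traceAddChar p r).IsPrimitive := by
  refine AddChar.IsPrimitive.of_ne_one (AddChar.ne_one_iff.mpr ?_)
  obtain ⟨x, hx⟩ := Algebra.trace_surjective (ZMod p) (GaloisField p r) 1
  refine ⟨x, ?_⟩
  rw [traceAddChar, AddChar.compAddMonoidHom_apply, LinearMap.toAddMonoidHom_coe, hx,
    ← (ZMod.stdAddChar (N := p)).map_zero_eq_one, Ne, ZMod.injective_stdAddChar.eq_iff]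
  exact one_ne_zero

end TraceCharacter

/-- For `q = p^r`, `p ≥ 5`, and the character `χ` of `F_q³`
determined by `λ₁,λ₂,λ₃` with `λ₃ ≠ 0`, there is `0 ≤ c < p` such that
`c₂(χ) = q·ω_p^{2c}` and `c₁(χ) = ω_p^c · ∑_x χ_q(ax³+bx)` where `a = λ₃/3` and
`b = λ₁ − λ₂²/(4λ₃)`; equivalently
`L(u/(√q·ω_p^c), χ) = 1 + (∑_x χ_q(ax³+bx)/√q)u + u²`. -/
theorem char_Lfunction_cubic_sum (p r : ℕ) [Fact p.Prime] (hp : 5 ≤ p) (hr : 1 ≤ r)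
    [Fintype (GaloisField p r)]
    (l1 l2 l3 : GaloisField p r) (hl3 : l3 ≠ 0) :
    ∃ c : ℕ, c < p ∧
      charSum3 (fun a1 a2 a3 => traceChar p r
          (l1 * a1 + l2 * (a2 - a1 ^ 2 / 2) + l3 * (a3 - a1 * a2 + a1 ^ 3 / 3))) 2
        = ((p : ℂ) ^ r) * Complex.exp (2 * Real.pi * Complex.I / p) ^ (2 * c)
      ∧ charSum3 (fun a1 a2 a3 => traceChar p r
          (l1 * a1 + l2 * (a2 - a1 ^ 2 / 2) + l3 * (a3 - a1 * a2 + a1 ^ 3 / 3))) 1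
        = Complex.exp (2 * Real.pi * Complex.I / p) ^ c *
            ∑ x : GaloisField p r,
              traceChar p r ((l3 / 3) * x ^ 3 + (l1 - l2 ^ 2 / (4 * l3)) * x) := by
  have h2 : (2 : GaloisField p r) ≠ 0 := by
    exact_mod_cast CharP.cast_ne_zero_of_ne_of_prime (GaloisField p r) Nat.prime_two (p := p)
      (by omega)
  have h3 : (3 : GaloisField p r) ≠ 0 := by
    exact_mod_cast CharP.cast_ne_zero_of_ne_of_prime (GaloisField p r) Nat.prime_three (p := p)
      (by omega)
  have hcard : (Fintype.card (GaloisField p r) : ℂ) = (p : ℂ) ^ r := by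
    rw [← Nat.card_eq_fintype_card, GaloisField.card p r (by omega), Nat.cast_pow]
  simp only [traceChar_eq_traceAddChar]
  refine ⟨(Algebra.trace (ZMod p) _ (cubicPhase l1 l2 l3 (l2 / (2 * l3)))).val, ZMod.val_lt _,
    ?_, ?_⟩
  · rw [charSum3_two_cubic _ _ _ (traceAddChar_isPrimitive p r) hl3,
      cubicPhase_double_inflection h2 h3 hl3, hcard, two_mul, AddChar.map_add_eq_mul,
      traceAddChar_apply, pow_mul', sq]
  · rw [charSum3_one_cubic _ _ _ h2 h3 hl3, traceAddChar_apply]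
end

section
/- Let α_1, …, α_m be non-zero complex numbers and define the sequence a_n = ∑_{i=1}^m α_i^n for n ≥ 1. Then the sequence (a_n)_{n ≥ 1} is periodic (i.e. there exists a positive integer N such that a_{n+N} = a_n for all n ≥ 1) if and only if every α_i is a root of unity. -/
open Finset

set_option maxHeartbeats 1000000 in
/-- For non-zero complex numbers `α₁,…,α_m`, the sequence
`a_n = ∑ᵢ αᵢⁿ` (for `n ≥ 1`) is periodic iff every `αᵢ` is a root of unity. -/
theorem power_sum_periodic_iff (m : ℕ) (α : Fin m → ℂ) (hα : ∀ i, α i ≠ 0) :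
    (∃ N : ℕ, 0 < N ∧ ∀ n : ℕ, 1 ≤ n → ∑ i, α i ^ (n + N) = ∑ i, α i ^ n)
      ↔ ∀ i, ∃ k : ℕ, 0 < k ∧ α i ^ k = 1 := by
  classical
  constructor
  · rintro ⟨N, hN, hper⟩ i
    refine ⟨N, hN, ?_⟩
    by_contra hne
    set S : Finset (Fin m) := univ.filter (fun j => α j ^ N ≠ 1) with hSdef
    have hiS : i ∈ S := by simp [hSdef, hne]
    set T : Finset ℂ := S.image α with hTdef
    -- key identity: for all n ≥ 1, ∑ j in S, (α j ^ N - 1) * α j ^ n = 0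
    have key : ∀ n : ℕ, 1 ≤ n → ∑ j ∈ S, (α j ^ N - 1) * α j ^ n = 0 := by
      intro n hn
      have h1 : ∑ j, (α j ^ N - 1) * α j ^ n = 0 := by
        have h2 := hper n hn
        calc ∑ j, (α j ^ N - 1) * α j ^ n
            = ∑ j, (α j ^ (n + N) - α j ^ n) := by
              refine Finset.sum_congr rfl fun j _ => ?_
              rw [sub_mul, one_mul, ← pow_add, add_comm N n]
          _ = 0 := by rw [Finset.sum_sub_distrib, h2, sub_self]
      rw [← h1]
      have hz : ∀ j ∈ (univ : Finset (Fin m)), j ∉ S → (α j ^ N - 1) * α j ^ n = 0 := by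
        intro j _ hj
        have hj1 : α j ^ N = 1 := by
          by_contra h'
          exact hj (by simp [hSdef, h'])
        simp [hj1]
      exact Finset.sum_subset (Finset.subset_univ S) hz
    -- coefficients
    set e : ℂ → ℂ := fun β => (#{j ∈ S | α j = β} : ℂ) * ((β ^ N - 1) * β) with hedef
    -- the linear combination of characters vanishes
    have hcomb : ∀ n : ℕ, ∑ β ∈ T, e β * β ^ n = 0 := by
      intro n
      have := key (n + 1) (Nat.le_add_left 1 n)
      have hrw : ∑ j ∈ S, (α j ^ N - 1) * α j ^ (n + 1)
          = ∑ β ∈ T, #{j ∈ S | α j = β} • ((β ^ N - 1) * β ^ (n + 1)) :=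
        Finset.sum_comp (fun β => (β ^ N - 1) * β ^ (n + 1)) α
      rw [key (n + 1) (Nat.le_add_left 1 n)] at hrw
      rw [← hrw.symm]
      refine Finset.sum_congr rfl fun β _ => ?_
      simp only [hedef, nsmul_eq_mul]
      ring
    -- Dedekind linear independence of characters
    have hinj : Function.Injective (fun β : ↥T => powersHom ℂ (β : ℂ)) := by
      intro β γ h
      have := congrArg (fun f : Multiplicative ℕ →* ℂ => f (Multiplicative.ofAdd 1)) h
      exact Subtype.ext (by simpa [powersHom_apply] using this)
    have hli : LinearIndependent ℂ
        (fun β : ↥T => ((powersHom ℂ (β : ℂ) : Multiplicative ℕ →* ℂ) : Multiplicative ℕ → ℂ)) :=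
      (linearIndependent_monoidHom (Multiplicative ℕ) ℂ).comp _ hinj
    have hzero : ∀ β : ↥T, e (β : ℂ) = 0 := by
      have := Fintype.linearIndependent_iff.mp hli (fun β => e (β : ℂ)) ?_
      · exact this
      · funext n
        have : ∑ β ∈ T, e β * β ^ n.toAdd = 0 := hcomb n.toAdd
        calc (∑ β : ↥T, e (β : ℂ) •
              ((powersHom ℂ (β : ℂ) : Multiplicative ℕ →* ℂ) : Multiplicative ℕ → ℂ)) n
            = ∑ β : ↥T, e (β : ℂ) * (β : ℂ) ^ n.toAdd := by
              simp [powersHom_apply]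
          _ = ∑ β ∈ T, e β * β ^ n.toAdd := Finset.sum_coe_sort T (fun β => e β * β ^ n.toAdd)
          _ = 0 := this
    -- derive contradiction at β = α i
    have hmem : α i ∈ T := Finset.mem_image_of_mem α hiS
    have h0 := hzero ⟨α i, hmem⟩
    have hcard : (0 : ℕ) < #{j ∈ S | α j = α i} :=
      Finset.card_pos.mpr ⟨i, Finset.mem_filter.mpr ⟨hiS, rfl⟩⟩
    have hcne : (#{j ∈ S | α j = α i} : ℂ) ≠ 0 := Nat.cast_ne_zero.mpr hcard.ne'
    have : ((α i) ^ N - 1) * α i ≠ 0 :=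
      mul_ne_zero (sub_ne_zero.mpr hne) (hα i)
    exact this (by
      have := mul_eq_zero.mp h0
      rcases this with h | h
      · exact absurd h hcne
      · exact h) |>.elim
  · intro h
    choose k hk hk1 using h
    refine ⟨∏ i, k i, Finset.prod_pos fun i _ => hk i, fun n _ => ?_⟩
    refine Finset.sum_congr rfl fun i _ => ?_
    obtain ⟨c, hc⟩ := Finset.dvd_prod_of_mem k (Finset.mem_univ i)
    rw [pow_add, hc, pow_mul, hk1, one_pow, mul_one]
end

section
/- Let p ≥ 7 be a prime, let j be an integer not divisible by p, and let ε_1, ε_2 ∈ {1, −1}. Then there exists an integer i such that the Legendre symbol ((i − j)/p) equals ε_1 and the Legendre symbol ((i + j)/p) equals ε_2. -/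
/-!
Write `χ` for the quadratic character of a finite field `F` of odd size `q` and fix `c ≠ 0`.
For signs `ε₁, ε₂`, the weight `(1 + ε₁ χ(t - c)) (1 + ε₂ χ(t + c))` is `4` when `t` has the
required pattern, `0` for every other `t ≠ ±c`, and at most `2` at `t = ±c`. Its sum over `t` is
`q - ε₁ ε₂ ≥ q - 1`, because `∑ χ(t ± c) = 0` and the Jacobi-type sum `∑ χ(t - c) χ(t + c)` is `-1`.
So if no `t` had the pattern we would get `q - 1 ≤ 4`, impossible once `q > 5`.
-/

open Finset

variable {F : Type*} [Field F] [Fintype F] [DecidableEq F]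

local notation "χ" => quadraticChar F

theorem quadraticChar_sum_add_zero (hF : ringChar F ≠ 2) (c : F) :
    ∑ t : F, χ (t + c) = 0 := by
  rw [Fintype.sum_equiv (Equiv.addRight c) (fun t ↦ χ (t + c)) _ fun _ ↦ rfl]
  exact quadraticChar_sum_zero hF

theorem quadraticChar_sum_sub_mul_add (hF : ringChar F ≠ 2) {c : F} (hc : c ≠ 0) :
    ∑ t : F, χ (t - c) * χ (t + c) = -1 := by
  have h2c : (2 : F) * c ≠ 0 := mul_ne_zero (Ring.two_ne_zero hF) hc
  have hχ2c : χ (2 * c) * χ (2 * c) = 1 := by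
    rw [← map_mul, ← sq, quadraticChar_sq_one' h2c]
  -- substitute `t = 2c x - c`, turning the sum into `χ(-1) J(χ, χ)`
  let e : F ≃ F := (Equiv.mulLeft₀ (2 * c) h2c).trans (Equiv.addRight (-c))
  have hsubst : ∀ x : F, χ (e x - c) * χ (e x + c) = χ (-1) * (χ x * χ (1 - x)) := by
    intro x
    have hsub : e x - c = -1 * (2 * c) * (1 - x) := by simp [e]; ring
    have hadd : e x + c = 2 * c * x := by simp [e]
    rw [hsub, hadd, map_mul χ (-1 * (2 * c)), map_mul χ (-1), map_mul χ (2 * c) x]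
    linear_combination (χ (-1) * χ x * χ (1 - x)) * hχ2c
  have hjacobi := jacobiSum_nontrivial_inv (quadraticChar_ne_one hF)
  rw [(quadraticChar_isQuadratic F).inv] at hjacobi
  rw [← Fintype.sum_equiv e _ _ fun _ ↦ rfl, Fintype.sum_congr _ _ hsubst, ← mul_sum,
    ← jacobiSum, hjacobi, mul_neg, ← map_mul, neg_one_mul, neg_neg, map_one]

theorem one_add_mul_quadraticChar_le_two {e : ℤ} (he : e = 1 ∨ e = -1) (x : F) :
    1 + e * χ x ≤ 2 := by
  rcases quadraticChar_isQuadratic F x with h | h | h <;> rcases he with rfl | rfl <;>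
    simp [h]

theorem one_add_mul_quadraticChar_eq_zero {e : ℤ} (he : e = 1 ∨ e = -1) {x : F} (hx : x ≠ 0)
    (hxe : χ x ≠ e) : 1 + e * χ x = 0 := by
  rcases quadraticChar_dichotomy hx with h | h <;> rcases he with rfl | rfl <;>
    simp_all

theorem exists_quadraticChar_sub_eq_and_add_eq (hF : ringChar F ≠ 2) (hcard : 5 < Fintype.card F)
    {c : F} (hc : c ≠ 0) {e₁ e₂ : ℤ} (he₁ : e₁ = 1 ∨ e₁ = -1) (he₂ : e₂ = 1 ∨ e₂ = -1) :
    ∃ t : F, χ (t - c) = e₁ ∧ χ (t + c) = e₂ := by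
  by_contra! hnone
  set w : F → ℤ := fun t ↦ (1 + e₁ * χ (t - c)) * (1 + e₂ * χ (t + c))
  have hexpand : ∀ t, w t = 1 + e₁ * χ (t + -c) + e₂ * χ (t + c)
      + e₁ * e₂ * (χ (t - c) * χ (t + c)) := by
    intro t
    simp only [w, ← sub_eq_add_neg]
    ring
  have hsum : ∑ t, w t = Fintype.card F - e₁ * e₂ := by
    simp only [Fintype.sum_congr _ _ hexpand, sum_add_distrib, ← mul_sum,
      quadraticChar_sum_add_zero hF, quadraticChar_sum_sub_mul_add hF hc]
    simp [sub_eq_add_neg]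
  have hc_ne_neg : c ≠ -c := fun h ↦
    mul_ne_zero (Ring.two_ne_zero hF) hc (by linear_combination h)
  have hweight : ∀ t, w t ≤ (if t = c then 2 else 0) + (if t = -c then 2 else 0) := by
    intro t
    by_cases htc : t = c
    · subst htc
      simp only [w, sub_self, quadraticChar_zero, mul_zero, add_zero, one_mul, if_pos,
        if_neg hc_ne_neg]
      exact one_add_mul_quadraticChar_le_two he₂ _
    by_cases htc' : t = -c
    · subst htc'
      simp only [w, neg_add_cancel, quadraticChar_zero, mul_zero, add_zero, mul_one, if_pos,
        if_neg hc_ne_neg.symm, zero_add]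
      exact one_add_mul_quadraticChar_le_two he₁ _
    rw [if_neg htc, if_neg htc', add_zero]
    have hsub : t - c ≠ 0 := sub_ne_zero.mpr htc
    have hadd : t + c ≠ 0 := fun h ↦ htc' (eq_neg_of_add_eq_zero_left h)
    by_cases h₁ : χ (t - c) = e₁
    · simp only [w, one_add_mul_quadraticChar_eq_zero he₂ hadd (hnone t h₁), mul_zero, le_refl]
    · simp only [w, one_add_mul_quadraticChar_eq_zero he₁ hsub h₁, zero_mul, le_refl]
  have hle : ∑ t, w t ≤ 4 := by
    calc ∑ t, w t ≤ ∑ t, ((if t = c then 2 else 0) + (if t = -c then 2 else 0)) :=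
          sum_le_sum fun t _ ↦ hweight t
      _ = 4 := by simp [sum_add_distrib]
  have hsign : e₁ * e₂ ≤ 1 := by rcases he₁ with rfl | rfl <;> rcases he₂ with rfl | rfl <;> simp
  have : (5 : ℤ) < Fintype.card F := by exact_mod_cast hcard
  linarith

/-- For a prime `p ≥ 7`, an integer `j` not divisible by `p` and
signs `ε₁, ε₂ ∈ {±1}`, there is an integer `i` with `((i−j)/p) = ε₁` and
`((i+j)/p) = ε₂`. -/
theorem legendre_two_values (p : ℕ) [Fact p.Prime] (hp : 7 ≤ p)
    (j : ℤ) (hj : ¬ (p : ℤ) ∣ j)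
    (e1 e2 : ℤ) (he1 : e1 = 1 ∨ e1 = -1) (he2 : e2 = 1 ∨ e2 = -1) :
    ∃ i : ℤ, legendreSym p (i - j) = e1 ∧ legendreSym p (i + j) = e2 := by
  have hF : ringChar (ZMod p) ≠ 2 := by rw [ZMod.ringChar_zmod_n]; omega
  have hj0 : (j : ZMod p) ≠ 0 := by rwa [Ne, ZMod.intCast_zmod_eq_zero_iff_dvd]
  obtain ⟨t, ht₁, ht₂⟩ :=
    exists_quadraticChar_sub_eq_and_add_eq hF (by rw [ZMod.card]; omega) hj0 he1 he2
  obtain ⟨i, rfl⟩ := ZMod.intCast_surjective t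
  exact ⟨i, by simpa [legendreSym] using ht₁, by simpa [legendreSym] using ht₂⟩
end
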